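/- arXiv:2407.09000 — 14 statements merged into one kernel-verified Lean document; each statement's English description precedes it below -/
import Mathlib

section
/- For all positive integers n, |3ψ(n) + ψ(n+1)| ≤ 2^n. -/
/-!
The recurrence has characteristic polynomial `X ^ 2 + X + 2`, whose roots have norm `2` in
`ℤ[α]`, `α ^ 2 + α + 2 = 0`. Hence the norm `a ^ 2 + a b + 2 b ^ 2` of `a - b α`, taken at two
consecutive terms `a = u (n + 1)`, `b = u n`, doubles at each step. The sequence
`φ n = 3 ψ n + ψ (n + 1)` satisfies the same recurrence and starts with norm `16`, so
`7 φ(n) ^ 2 ≤ 4 · 16 · 2 ^ n`, which is at most `7 · 4 ^ n` once `n ≥ 4`; the cases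
`n = 1, 2, 3` are checked directly.
-/

section NormForm

variable {R : Type*} [CommRing R]

def SatisfiesRec (u : ℕ → R) : Prop :=
  ∀ n, u (n + 2) = -2 * u n - u (n + 1)

def normForm (a b : R) : R :=
  a ^ 2 + a * b + 2 * b ^ 2

theorem SatisfiesRec.linComb {u : ℕ → R} (hu : SatisfiesRec u) (c d : R) :
    SatisfiesRec fun n => c * u n + d * u (n + 1) := fun n => by
  simp only [hu n, hu (n + 1)]
  ring

theorem SatisfiesRec.normForm_succ {u : ℕ → R} (hu : SatisfiesRec u) (n : ℕ) :
    normForm (u (n + 2)) (u (n + 1)) = 2 * normForm (u (n + 1)) (u n) := by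
  simp only [normForm, hu n]
  ring

theorem SatisfiesRec.normForm_eq {u : ℕ → R} (hu : SatisfiesRec u) (n : ℕ) :
    normForm (u (n + 1)) (u n) = 2 ^ n * normForm (u 1) (u 0) := by
  induction n with
  | zero => simp
  | succ n ih => rw [hu.normForm_succ, ih, pow_succ]; ring

theorem seven_mul_sq_le_four_mul_normForm [LinearOrder R] [IsStrictOrderedRing R] (a b : R) :
    7 * b ^ 2 ≤ 4 * normForm a b := by
  have h : 4 * normForm a b = (2 * a + b) ^ 2 + 7 * b ^ 2 := by unfold normForm; ring
  linarith [sq_nonneg (2 * a + b)]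

end NormForm

theorem abs_le_two_pow_of_seven_mul_sq_le {x : ℤ} {n : ℕ} (hn : 4 ≤ n)
    (h : 7 * x ^ 2 ≤ 64 * 2 ^ n) : |x| ≤ 2 ^ n := by
  have h16 : (16 : ℤ) ≤ 2 ^ n := by
    simpa using pow_le_pow_right₀ (by norm_num : (1 : ℤ) ≤ 2) hn
  refine abs_le_of_sq_le_sq ?_ (by positivity)
  nlinarith

theorem stmt_1
    (psi : ℕ → ℤ)
    (hpsi0 : psi 0 = 1) (hpsi1 : psi 1 = 0)
    (hpsi : ∀ n : ℕ, 2 ≤ n → psi n = -2 * psi (n - 2) - psi (n - 1)) :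
    ∀ n : ℕ, 1 ≤ n → |3 * psi n + psi (n + 1)| ≤ 2 ^ n := by
  have hψ : SatisfiesRec psi := fun n => by simpa using hpsi (n + 2) (by omega)
  set φ : ℕ → ℤ := fun n => 3 * psi n + psi (n + 1)
  have hφ : SatisfiesRec φ := by simpa using hψ.linComb 3 1
  have hφ0 : φ 0 = 3 := by simp [φ, hpsi0, hpsi1]
  have hφ1 : φ 1 = -2 := by simp [φ, hψ 0, hpsi0, hpsi1]
  have hφ2 : φ 2 = -4 := by rw [hφ 0, hφ0, hφ1]; norm_num
  have hφ3 : φ 3 = 8 := by rw [hφ 1, hφ1, hφ2]; norm_num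
  intro n hn
  change |φ n| ≤ 2 ^ n
  rcases le_or_gt 4 n with h4 | h4
  · refine abs_le_two_pow_of_seven_mul_sq_le h4 ?_
    have := seven_mul_sq_le_four_mul_normForm (φ (n + 1)) (φ n)
    rw [hφ.normForm_eq, normForm, hφ0, hφ1] at this
    linarith
  · interval_cases n <;> simp [hφ1, hφ2, hφ3]
end

section
/- For all n ≥ 2, a(n) = 3n/16 + 9/64 - (ψ(n-2) + 3ψ(n-1))/2^(n+4). -/
/-!
With `x m = a (m + 2)` and `y m = i (m + 2)` the recursion becomes `x (m + 1) = (y m + x m) / 2`,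
`y (m + 3) = (c + y m + x m) / 2` with `c = i 2 + a 2 = 3/2`, which determines `x` and `y` from
their values at `0, 1, 2`. It therefore suffices to check that the closed form for `a`, together
with a companion closed form for `i`, satisfies these recurrences. The closed forms come from the
characteristic polynomial `X (X - 1) (2X² + X + 1)` of the homogeneous system: the roots of
`2X² + X + 1` are half those of `X² + X + 2`, the characteristic polynomial of `ψ`, whence the terms
`ψ m / 2 ^ m`, while the double root `1` (from `c`) gives the linear part.
-/

section CoupledRec

variable {K : Type*} [Field K]

def CoupledRec (c : K) (x y : ℕ → K) : Prop :=
  (∀ m, x (m + 1) = (y m + x m) / 2) ∧ ∀ m, y (m + 3) = (c + y m + x m) / 2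

theorem CoupledRec.eq_of_lt_three {c : K} {x y x' y' : ℕ → K}
    (h : CoupledRec c x y) (h' : CoupledRec c x' y')
    (hinit : ∀ m < 3, x m = x' m ∧ y m = y' m) (m : ℕ) :
    x m = x' m ∧ y m = y' m := by
  induction m using Nat.strong_induction_on with
  | _ m ih =>
    match m, ih with
    | 0, _ | 1, _ | 2, _ => exact hinit _ (by norm_num)
    | k + 3, ih =>
      obtain ⟨hx2, hy2⟩ := ih (k + 2) (by omega)
      obtain ⟨hx0, hy0⟩ := ih k (by omega)
      exact ⟨by rw [h.1, h'.1, hx2, hy2], by rw [h.2, h'.2, hx0, hy0]⟩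

end CoupledRec

section ClosedForm

variable (ψ : ℕ → ℤ)

def closedA (m : ℕ) : ℚ :=
  3 * ((m : ℚ) + 2) / 16 + 9 / 64 - ((ψ m : ℚ) + 3 * ψ (m + 1)) / 2 ^ (m + 6)

def closedI (m : ℕ) : ℚ :=
  3 * ((m : ℚ) + 4) / 16 + 9 / 64 + (7 * (ψ m : ℚ) + 5 * ψ (m + 1)) / 2 ^ (m + 6)

variable {ψ}

theorem coupledRec_closedA_closedI (hψ : ∀ m, ψ (m + 2) = -2 * ψ m - ψ (m + 1)) :
    CoupledRec (3 / 2) (closedA ψ) (closedI ψ) := by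
  have hψ3 (m : ℕ) : ψ (m + 3) = 2 * ψ m - ψ (m + 1) := by
    rw [hψ (m + 1), hψ m]; ring
  have hψ4 (m : ℕ) : ψ (m + 4) = 2 * ψ m + 3 * ψ (m + 1) := by
    rw [hψ (m + 2), hψ3 m, hψ m]; ring
  constructor
  · intro m
    simp only [closedA, closedI, hψ m]
    push_cast
    field_simp
    ring
  · intro m
    simp only [closedA, closedI, hψ3 m, hψ4 m]
    push_cast
    field_simp
    ring

end ClosedForm

theorem stmt_3_general
    (psi : ℕ → ℤ)
    (hpsi0 : psi 0 = 1) (hpsi1 : psi 1 = 0)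
    (hpsi : ∀ n : ℕ, 2 ≤ n → psi n = -2 * psi (n - 2) - psi (n - 1))
    (i a : ℕ → ℚ)
    (hi1 : i 1 = 1) (ha1 : a 1 = 0)
    (ha : ∀ n : ℕ, 2 ≤ n → a n = (i (n - 1) + a (n - 1)) / 2)
    (hi23 : ∀ n : ℕ, 2 ≤ n → n ≤ 3 → i n = i (n - 1))
    (hi4 : i 4 = (i 1 + a 1 + i 2 + a 2) / 2)
    (hi5 : ∀ n : ℕ, 5 ≤ n → i n = (i 2 + a 2 + i (n - 3) + a (n - 3)) / 2) :
    ∀ n : ℕ, 2 ≤ n →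
      a n = 3 * n / 16 + 9 / 64 - ((psi (n - 2) : ℚ) + 3 * psi (n - 1)) / 2 ^ (n + 4) := by
  have hψ (m : ℕ) : psi (m + 2) = -2 * psi m - psi (m + 1) := by simpa using hpsi (m + 2) (by omega)
  have hψ2 : psi 2 = -2 := by simpa [hpsi0, hpsi1] using hψ 0
  have hψ3 : psi 3 = 2 := by simpa [hpsi1, hψ2] using hψ 1
  have hi2 : i 2 = 1 := by simpa [hi1] using hi23 2 le_rfl (by norm_num)
  have hi3 : i 3 = 1 := by simpa [hi2] using hi23 3 (by norm_num) le_rfl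
  have ha2 : a 2 = 1 / 2 := by rw [ha 2 le_rfl]; norm_num [hi1, ha1]
  have ha3 : a 3 = 3 / 4 := by rw [ha 3 (by norm_num)]; norm_num [hi2, ha2]
  have ha4 : a 4 = 7 / 8 := by rw [ha 4 (by norm_num)]; norm_num [hi3, ha3]
  have hsol : CoupledRec (3 / 2) (fun m => a (m + 2)) (fun m => i (m + 2)) :=
    ⟨fun m => by simpa using ha (m + 3) (by omega),
     fun m => show i (m + 5) = (3 / 2 + i (m + 2) + a (m + 2)) / 2 by
      rw [hi5 (m + 5) (by omega), hi2, ha2, show m + 5 - 3 = m + 2 by omega]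
      ring⟩
  have hclosed := hsol.eq_of_lt_three (coupledRec_closedA_closedI hψ) fun m hm => by
    interval_cases m <;> norm_num [closedA, closedI, hpsi0, hpsi1, hψ2, hψ3, hi2, hi3, ha2, ha3, ha4,
      hi4, hi1, ha1]
  intro n hn
  obtain ⟨m, rfl⟩ := Nat.exists_eq_add_of_le' hn
  rw [(hclosed m).1, closedA, Nat.add_sub_cancel, show m + 2 - 1 = m + 1 by omega]
  push_cast
  ring

theorem stmt_3
    (psi : ℕ → ℤ)
    (hpsi0 : psi 0 = 1) (hpsi1 : psi 1 = 0)
    (hpsi : ∀ n : ℕ, 2 ≤ n → psi n = -2 * psi (n - 2) - psi (n - 1))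
    (i a : ℕ → ℚ)
    (ha0 : a 0 = 0) (hi1 : i 1 = 1) (ha1 : a 1 = 0)
    (ha : ∀ n : ℕ, 2 ≤ n → a n = (i (n - 1) + a (n - 1)) / 2)
    (hi23 : ∀ n : ℕ, 2 ≤ n → n ≤ 3 → i n = i (n - 1))
    (hi4 : i 4 = (i 1 + a 1 + i 2 + a 2) / 2)
    (hi5 : ∀ n : ℕ, 5 ≤ n → i n = (i 2 + a 2 + i (n - 3) + a (n - 3)) / 2) :
    ∀ n : ℕ, 2 ≤ n →
      a n = 3 * n / 16 + 9 / 64 - ((psi (n - 2) : ℚ) + 3 * psi (n - 1)) / 2 ^ (n + 4) :=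
  stmt_3_general psi hpsi0 hpsi1 hpsi i a hi1 ha1 ha hi23 hi4 hi5
end

section
/- For all n ≥ 2, i(n) = 3n/16 + 33/64 + (7ψ(n-2) + 5ψ(n-1))/2^(n+4). -/
/-!
From `n = 2` on, `(i, a)` is determined by `i 2 = 1`, `a 2 = 1/2`, `i 3 = 1`, `i 4 = 5/4` and the
recurrences `a (n + 1) = (i n + a n) / 2`, `i (n + 3) = (3/2 + i n + a n) / 2`, where
`3/2 = i 2 + a 2`. The closed forms for `i` and `a` obey the same recurrences: the linear parts
match on the nose, and `ψ (m + 2) = -2 ψ m - ψ (m + 1)` matches the terms of size `2⁻ⁿ`. They also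
take the same initial values, so strong induction gives the formula.
-/

def iClosed (ψ : ℕ → ℚ) (n : ℕ) : ℚ :=
  3 * n / 16 + 33 / 64 + (7 * ψ (n - 2) + 5 * ψ (n - 1)) / 2 ^ (n + 4)

def aClosed (ψ : ℕ → ℚ) (n : ℕ) : ℚ :=
  3 * n / 16 + 9 / 64 + (-ψ (n - 2) - 3 * ψ (n - 1)) / 2 ^ (n + 4)

section Closed

variable {ψ : ℕ → ℚ} (hψ : ∀ m, ψ (m + 2) = -2 * ψ m - ψ (m + 1))
include hψ

theorem aClosed_add_three (m : ℕ) :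
    aClosed ψ (m + 3) = (iClosed ψ (m + 2) + aClosed ψ (m + 2)) / 2 := by
  simp only [aClosed, iClosed, Nat.add_sub_cancel, show m + 3 - 2 = m + 1 by omega,
    show m + 3 - 1 = m + 2 by omega, show m + 2 - 1 = m + 1 by omega, hψ m]
  push_cast
  field_simp
  ring

theorem iClosed_add_five (m : ℕ) :
    iClosed ψ (m + 5) = (3 / 2 + iClosed ψ (m + 2) + aClosed ψ (m + 2)) / 2 := by
  simp only [iClosed, aClosed, Nat.add_sub_cancel, show m + 5 - 2 = m + 1 + 2 by omega,
    show m + 5 - 1 = m + 2 + 2 by omega, show m + 2 - 1 = m + 1 by omega, hψ (m + 2),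
    hψ (m + 1), hψ m]
  push_cast
  field_simp
  ring

end Closed

theorem eq_closed_of_recurrence {ψ : ℕ → ℚ} (hψ0 : ψ 0 = 1) (hψ1 : ψ 1 = 0)
    (hψ : ∀ m, ψ (m + 2) = -2 * ψ m - ψ (m + 1)) {i a : ℕ → ℚ}
    (hi2 : i 2 = 1) (ha2 : a 2 = 1 / 2) (hi3 : i 3 = 1) (hi4 : i 4 = 5 / 4)
    (ha : ∀ m, a (m + 3) = (i (m + 2) + a (m + 2)) / 2)
    (hi : ∀ m, i (m + 5) = (3 / 2 + i (m + 2) + a (m + 2)) / 2) :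
    ∀ n, 2 ≤ n → i n = iClosed ψ n ∧ a n = aClosed ψ n := by
  have hψ2 : ψ 2 = -2 := by rw [hψ 0, hψ0, hψ1]; norm_num
  have hψ3 : ψ 3 = 2 := by rw [hψ 1, hψ1, hψ2]; norm_num
  intro n
  induction n using Nat.strong_induction_on with
  | _ n ih =>
    intro hn
    obtain ⟨m, rfl⟩ : ∃ m, n = m + 2 := ⟨n - 2, by omega⟩
    match m with
    | 0 => norm_num [iClosed, aClosed, hi2, ha2, hψ0, hψ1]
    | k + 1 =>
      have ha' : a (k + 3) = aClosed ψ (k + 3) := by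
        obtain ⟨hik, hak⟩ := ih (k + 2) (by omega) (by omega)
        rw [ha, hik, hak, aClosed_add_three hψ]
      refine ⟨?_, ha'⟩
      match k with
      | 0 => norm_num [iClosed, hi3, hψ1, hψ2]
      | 1 => norm_num [iClosed, hi4, hψ2, hψ3]
      | j + 2 =>
        obtain ⟨hij, haj⟩ := ih (j + 2) (by omega) (by omega)
        rw [hi, hij, haj, iClosed_add_five hψ]

theorem stmt_4_general
    (psi : ℕ → ℤ)
    (hpsi0 : psi 0 = 1) (hpsi1 : psi 1 = 0)
    (hpsi : ∀ n : ℕ, 2 ≤ n → psi n = -2 * psi (n - 2) - psi (n - 1))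
    (i a : ℕ → ℚ)
    (hi1 : i 1 = 1) (ha1 : a 1 = 0)
    (ha : ∀ n : ℕ, 2 ≤ n → a n = (i (n - 1) + a (n - 1)) / 2)
    (hi23 : ∀ n : ℕ, 2 ≤ n → n ≤ 3 → i n = i (n - 1))
    (hi4 : i 4 = (i 1 + a 1 + i 2 + a 2) / 2)
    (hi5 : ∀ n : ℕ, 5 ≤ n → i n = (i 2 + a 2 + i (n - 3) + a (n - 3)) / 2) :
    ∀ n : ℕ, 2 ≤ n →
      i n = 3 * n / 16 + 33 / 64 + (7 * (psi (n - 2) : ℚ) + 5 * psi (n - 1)) / 2 ^ (n + 4) := by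
  have hi2 : i 2 = 1 := by rw [hi23 2 le_rfl (by norm_num), hi1]
  have ha2 : a 2 = 1 / 2 := by rw [ha 2 le_rfl, hi1, ha1]; norm_num
  have hi3 : i 3 = 1 := by rw [hi23 3 (by norm_num) le_rfl, hi2]
  have hψ : ∀ m, (psi (m + 2) : ℚ) = -2 * psi m - psi (m + 1) := fun m => by
    exact_mod_cast hpsi (m + 2) (by omega)
  refine fun n hn => (eq_closed_of_recurrence (ψ := fun n => (psi n : ℚ)) (by simp [hpsi0])
    (by simp [hpsi1]) hψ hi2 ha2 hi3 ?_ (fun m => ha (m + 3) (by omega))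
    (fun m => ?_) n hn).1
  · rw [hi4, hi1, ha1, hi2, ha2]; norm_num
  · rw [hi5 (m + 5) (by omega), show m + 5 - 3 = m + 2 by omega, hi2, ha2]; norm_num

theorem stmt_4
    (psi : ℕ → ℤ)
    (hpsi0 : psi 0 = 1) (hpsi1 : psi 1 = 0)
    (hpsi : ∀ n : ℕ, 2 ≤ n → psi n = -2 * psi (n - 2) - psi (n - 1))
    (i a : ℕ → ℚ)
    (ha0 : a 0 = 0) (hi1 : i 1 = 1) (ha1 : a 1 = 0)
    (ha : ∀ n : ℕ, 2 ≤ n → a n = (i (n - 1) + a (n - 1)) / 2)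
    (hi23 : ∀ n : ℕ, 2 ≤ n → n ≤ 3 → i n = i (n - 1))
    (hi4 : i 4 = (i 1 + a 1 + i 2 + a 2) / 2)
    (hi5 : ∀ n : ℕ, 5 ≤ n → i n = (i 2 + a 2 + i (n - 3) + a (n - 3)) / 2) :
    ∀ n : ℕ, 2 ≤ n →
      i n = 3 * n / 16 + 33 / 64 + (7 * (psi (n - 2) : ℚ) + 5 * psi (n - 1)) / 2 ^ (n + 4) :=
  stmt_4_general psi hpsi0 hpsi1 hpsi i a hi1 ha1 ha hi23 hi4 hi5
end

section
/- The sequence c(n)/n converges to 3/16 as n → ∞, where c(n) = a(n-1). -/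
private def psi : ℕ → ℤ
  | 0 => 1
  | 1 => 0
  | n + 2 => -2 * psi n - psi (n + 1)

private lemma psi_inv (n : ℕ) :
    psi (n+1) ^ 2 + psi (n+1) * psi n + 2 * psi n ^ 2 = 2 ^ (n+1) := by
  induction n with
  | zero => decide
  | succ k ih =>
    have h : psi (k+2) = -2 * psi k - psi (k+1) := rfl
    rw [h, pow_succ]
    linear_combination 2 * ih

private lemma psi_bound (n : ℕ) : (7 * psi n + 5 * psi (n+1)) ^ 2 ≤ 2 ^ (n+8) := by
  have h := psi_inv n
  have h2 : (2:ℤ) ^ (n+8) = 128 * 2 ^ (n+1) := by ring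
  nlinarith [sq_nonneg (psi n + psi (n+1)), sq_nonneg (psi n), sq_nonneg (psi (n+1))]

private lemma psi_abs (n : ℕ) : |7 * psi n + 5 * psi (n+1)| ≤ 16 * 2 ^ n := by
  apply abs_le_of_sq_le_sq _ (by positivity)
  have h := psi_bound n
  have ht : (1:ℤ) ≤ 2 ^ n := by
    calc (1:ℤ) = 1^n := (one_pow n).symm
      _ ≤ 2^n := pow_le_pow_left₀ (by norm_num) (by norm_num) n
  have h2 : (2:ℤ) ^ (n+8) = 256 * 2 ^ n := by ring
  nlinarith

theorem stmt_6
    (i a : ℕ → ℚ)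
    (ha0 : a 0 = 0) (hi1 : i 1 = 1) (ha1 : a 1 = 0)
    (ha : ∀ n : ℕ, 2 ≤ n → a n = (i (n - 1) + a (n - 1)) / 2)
    (hi23 : ∀ n : ℕ, 2 ≤ n → n ≤ 3 → i n = i (n - 1))
    (hi4 : i 4 = (i 1 + a 1 + i 2 + a 2) / 2)
    (hi5 : ∀ n : ℕ, 5 ≤ n → i n = (i 2 + a 2 + i (n - 3) + a (n - 3)) / 2) :
    Filter.Tendsto (fun n : ℕ => ((a (n - 1) : ℝ) / n)) Filter.atTop (nhds (3 / 16)) := by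
  -- basic values
  have ha2 : a 2 = 1/2 := by have := ha 2 (by norm_num); rw [this]; norm_num [hi1, ha1]
  have hi2 : i 2 = 1 := by have := hi23 2 (by norm_num) (by norm_num); rw [this, hi1]
  have hi3 : i 3 = 1 := by have := hi23 3 (by norm_num) (by norm_num); rw [this, hi2]
  have ha3 : a 3 = 3/4 := by have := ha 3 (by norm_num); rw [this]; norm_num [hi2, ha2]
  have ha4 : a 4 = 7/8 := by have := ha 4 (by norm_num); rw [this]; norm_num [hi3, ha3]
  have hi4' : i 4 = 5/4 := by rw [hi4, hi1, ha1, hi2, ha2]; norm_num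
  have ha5 : a 5 = 17/16 := by have := ha 5 (by norm_num); rw [this]; norm_num [hi4', ha4]
  -- derived recurrence
  have hrec : ∀ m : ℕ, 1 ≤ m → a (m+5) = 3/8 + (a (m+2) + a (m+4)) / 2 := by
    intro m hm
    have h1 : a (m+5) = (i (m+4) + a (m+4)) / 2 := by
      have := ha (m+5) (by omega); simpa using this
    have h2 : i (m+4) = (i 2 + a 2 + i (m+1) + a (m+1)) / 2 := by
      have := hi5 (m+4) (by omega); simpa using this
    have h3 : a (m+2) = (i (m+1) + a (m+1)) / 2 := by
      have := ha (m+2) (by omega); simpa using this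
    rw [h1, h2, hi2, ha2]
    linarith [h3]
  -- closed form
  set C : ℕ → ℚ := fun n => ((7 * psi n + 5 * psi (n+1) : ℤ) : ℚ) with hC
  have hform : ∀ n : ℕ,
      a (n+2) = 3*((n+2 : ℕ) : ℚ)/16 + 9/64 + C (n+2) / (64 * 2^(n+2)) ∧
      a (n+3) = 3*((n+3 : ℕ) : ℚ)/16 + 9/64 + C (n+3) / (64 * 2^(n+3)) ∧
      a (n+4) = 3*((n+4 : ℕ) : ℚ)/16 + 9/64 + C (n+4) / (64 * 2^(n+4)) ∧
      a (n+5) = 3*((n+5 : ℕ) : ℚ)/16 + 9/64 + C (n+5) / (64 * 2^(n+5)) := by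
    intro n
    induction n with
    | zero =>
      have p2 : psi 2 = -2 := rfl
      have p3 : psi 3 = 2 := rfl
      have p4 : psi 4 = 2 := rfl
      have p5 : psi 5 = -6 := rfl
      have p6 : psi 6 = 2 := rfl
      refine ⟨?_, ?_, ?_, ?_⟩ <;>
        simp only [hC] <;>
        norm_num [p2, p3, p4, p5, p6, ha2, ha3, ha4, ha5]
    | succ k ih =>
      obtain ⟨h2, h3, h4, h5⟩ := ih
      refine ⟨h3, h4, h5, ?_⟩
      have hr : a (k+6) = 3/8 + (a (k+3) + a (k+5)) / 2 := hrec (k+1) (by omega)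
      show a (k+6) = 3*((k+6 : ℕ) : ℚ)/16 + 9/64 + C (k+6) / (64 * 2^(k+6))
      rw [hr, h3, h5]
      simp only [hC]
      have e6 : psi (k+6) = -2 * psi (k+4) - psi (k+5) := rfl
      have e5 : psi (k+5) = -2 * psi (k+3) - psi (k+4) := rfl
      have e7 : psi (k+6+1) = -2 * psi (k+5) - psi (k+6) := rfl
      rw [e7, e6, e5]
      have hp3 : (0:ℚ) < 2^(k+3) := by positivity
      have hp5 : (2:ℚ)^(k+5) = 2^(k+3) * 4 := by ring
      have hp6 : (2:ℚ)^(k+6) = 2^(k+3) * 8 := by ring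
      rw [hp5, hp6]
      push_cast
      field_simp
      ring
  -- bound on the error term
  have hCbound : ∀ n : ℕ, |C n| ≤ 16 * 2^n := by
    intro n
    have h := psi_abs n
    simp only [hC]
    rw [← Int.cast_abs]
    calc ((|7 * psi n + 5 * psi (n+1)| : ℤ) : ℚ) ≤ ((16 * 2^n : ℤ) : ℚ) := by exact_mod_cast h
      _ = 16 * 2^n := by push_cast; ring
  have habs : ∀ n : ℕ, 2 ≤ n → |a n - 3*(n:ℚ)/16| ≤ 1/2 := by
    intro n hn
    obtain ⟨m, rfl⟩ : ∃ m, n = m + 2 := ⟨n - 2, by omega⟩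
    have hf := (hform m).1
    have hb := hCbound (m+2)
    have hpos : (0:ℚ) < 64 * 2^(m+2) := by positivity
    have hE : |C (m+2) / (64 * 2^(m+2))| ≤ 1/4 := by
      rw [abs_div, abs_of_pos hpos, div_le_iff₀ hpos]
      calc |C (m+2)| ≤ 16 * 2^(m+2) := hb
        _ = 1/4 * (64 * 2^(m+2)) := by ring
    rw [hf]
    have h1 := abs_le.mp hE
    rw [abs_le]
    constructor <;> [linarith [h1.1]; linarith [h1.2]]
  -- final squeeze
  have hfin : ∀ n : ℕ, 3 ≤ n → |((a (n-1) : ℝ))/n - 3/16| ≤ 1/n := by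
    intro n hn
    obtain ⟨m, rfl⟩ : ∃ m, n = m + 3 := ⟨n - 3, by omega⟩
    have hb := habs (m+2) (by omega)
    have hbR : |((a (m+2) : ℝ)) - 3*((m:ℝ)+2)/16| ≤ 1/2 := by
      have h1 := abs_le.mp hb
      rw [abs_le]
      constructor
      · have h2 := (Rat.cast_le (K := ℝ)).mpr h1.1; push_cast at h2; linarith
      · have h2 := (Rat.cast_le (K := ℝ)).mpr h1.2; push_cast at h2; linarith
    show |((a (m+2) : ℝ))/((m+3 : ℕ) : ℝ) - 3/16| ≤ 1/((m+3 : ℕ) : ℝ)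
    have hc : ((m+3 : ℕ) : ℝ) = (m:ℝ) + 3 := by push_cast; ring
    rw [hc]
    have hmpos : (0:ℝ) < (m:ℝ) + 3 := by positivity
    have key : |((a (m+2) : ℝ)) - 3*((m:ℝ)+3)/16| ≤ 1 := by
      have h1 := abs_le.mp hbR
      rw [abs_le]
      constructor <;> [linarith [h1.1]; linarith [h1.2]]
    have heq : ((a (m+2) : ℝ))/((m:ℝ)+3) - 3/16
        = (((a (m+2) : ℝ)) - 3*((m:ℝ)+3)/16)/((m:ℝ)+3) := by
      field_simp
    rw [heq, abs_div, abs_of_pos hmpos]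
    gcongr
  have hsq : Filter.Tendsto (fun n : ℕ => ((a (n-1) : ℝ))/n - 3/16) Filter.atTop (nhds 0) := by
    apply squeeze_zero_norm' (a := fun n : ℕ => 1/(n:ℝ))
    · filter_upwards [Filter.eventually_atTop.mpr ⟨3, fun n hn => hfin n hn⟩] with n h
      simpa [Real.norm_eq_abs] using h
    · exact tendsto_one_div_atTop_nhds_zero_nat
  have hfinal := hsq.add_const (3/16 : ℝ)
  simpa using hfinal
end

section
/- For all positive integers m and n with m ≤ n - 2, i(n) ≥ (i(m) + a(m) + i(n-m-1) + a(n-m-1))/2. -/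
theorem stmt_7
    (i a : ℕ → ℚ)
    (ha0 : a 0 = 0) (hi1 : i 1 = 1) (ha1 : a 1 = 0)
    (ha : ∀ n : ℕ, 2 ≤ n → a n = (i (n - 1) + a (n - 1)) / 2)
    (hi23 : ∀ n : ℕ, 2 ≤ n → n ≤ 3 → i n = i (n - 1))
    (hi4 : i 4 = (i 1 + a 1 + i 2 + a 2) / 2)
    (hi5 : ∀ n : ℕ, 5 ≤ n → i n = (i 2 + a 2 + i (n - 3) + a (n - 3)) / 2) :
    ∀ m n : ℕ, 1 ≤ m → 1 ≤ n → m ≤ n - 2 →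
      i n ≥ (i m + a m + i (n - m - 1) + a (n - m - 1)) / 2 := by
  have hi2 : i 2 = 1 := by simpa [hi1] using hi23 2 (by norm_num) (by norm_num)
  have ha2 : a 2 = 1/2 := by simpa [hi1, ha1] using ha 2 (by norm_num)
  have hi3 : i 3 = 1 := by simpa [hi2] using hi23 3 (by norm_num) (by norm_num)
  have ha3 : a 3 = 3/4 := by rw [ha 3 (by norm_num)]; norm_num [hi2, ha2]
  have hi4' : i 4 = 5/4 := by rw [hi4, hi1, ha1, hi2, ha2]; norm_num
  have ha4 : a 4 = 7/8 := by rw [ha 4 (by norm_num)]; norm_num [hi3, ha3]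
  have hi5' : i 5 = 3/2 := by rw [hi5 5 le_rfl]; norm_num [hi2, ha2]
  have ha5 : a 5 = 17/16 := by rw [ha 5 (by norm_num)]; norm_num [hi4', ha4]
  have hrec : ∀ m : ℕ, 5 ≤ m →
      i m + a m = 3/4 + ((i (m-1) + a (m-1)) + (i (m-3) + a (m-3)))/2 := by
    intro m hm
    rw [hi5 m hm, ha m (by omega), hi2, ha2]; ring
  have hb : ∀ m : ℕ, 1 ≤ m →
      (3*(m:ℚ)+5)/8 ≤ i m + a m ∧ i m + a m ≤ (3*(m:ℚ)+6)/8 ∧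
      (m ≠ 2 → i m + a m ≤ (6*(m:ℚ)+11)/16) := by
    intro m
    induction m using Nat.strong_induction_on with
    | _ m IH =>
      intro hm
      rcases lt_or_ge m 6 with h6 | h6
      · interval_cases m <;>
          refine ⟨by norm_num [hi1, ha1, hi2, ha2, hi3, ha3, hi4', ha4, hi5', ha5],
                  by norm_num [hi1, ha1, hi2, ha2, hi3, ha3, hi4', ha4, hi5', ha5],
                  fun h => by revert h; norm_num [hi1, ha1, hi2, ha2, hi3, ha3, hi4', ha4, hi5', ha5]⟩
      · have h1 := IH (m-1) (by omega) (by omega)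
        have h3 := IH (m-3) (by omega) (by omega)
        have hr := hrec m (by omega)
        have c1 : ((m-1 : ℕ) : ℚ) = (m:ℚ) - 1 := by
          rw [Nat.cast_sub (by omega)]; norm_num
        have c3 : ((m-3 : ℕ) : ℚ) = (m:ℚ) - 3 := by
          rw [Nat.cast_sub (by omega)]; norm_num
        have h1u := h1.2.2 (by omega)
        have h3u := h3.2.2 (by omega)
        have h1l := h1.1; have h1m := h1.2.1
        have h3l := h3.1; have h3m := h3.2.1
        rw [c1] at h1l h1m h1u
        rw [c3] at h3l h3m h3u
        exact ⟨by rw [hr]; linarith, by rw [hr]; linarith, fun _ => by rw [hr]; linarith⟩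
  intro m n hm hn hmn
  obtain ⟨k, hk1, rfl⟩ : ∃ k, 1 ≤ k ∧ n = m + k + 1 := ⟨n - m - 1, by omega, by omega⟩
  have e1 : m + k + 1 - m - 1 = k := by omega
  rw [e1]
  rcases lt_or_ge (m + k + 1) 5 with h5 | h5
  · have hcase : (m = 1 ∧ k = 1) ∨ (m = 1 ∧ k = 2) ∨ (m = 2 ∧ k = 1) := by omega
    rcases hcase with ⟨rfl, rfl⟩ | ⟨rfl, rfl⟩ | ⟨rfl, rfl⟩ <;>
      norm_num [hi1, ha1, hi2, ha2, hi3, hi4']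
  · have e3 : m + k + 1 - 3 = m + k - 2 := by omega
    have hin := hi5 (m + k + 1) h5
    rw [e3] at hin
    by_cases hm2 : m = 2
    · subst hm2
      have e4 : 2 + k - 2 = k := by omega
      rw [e4] at hin
      rw [ge_iff_le, hin]
    · by_cases hk2 : k = 2
      · subst hk2
        have e4 : m + 2 - 2 = m := by omega
        rw [e4] at hin
        rw [ge_iff_le, hin]; linarith
      · have hbm := (hb m hm).2.2 hm2
        have hbk := (hb k hk1).2.2 hk2
        have hb3 := (hb (m + k - 2) (by omega)).1
        have c : ((m + k - 2 : ℕ) : ℚ) = (m:ℚ) + k - 2 := by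
          rw [Nat.cast_sub (by omega)]; push_cast; ring
        rw [c] at hb3
        rw [ge_iff_le, hin]
        linarith
end

section
/- For all positive integers n, i(n+1) ≥ i(n), i.e., the sequence i is monotone nondecreasing. -/
/-!
Write `a (n + 1) = (i n + a n) / 2` and, for `n ≥ 1`, `i (n + 3) = (c + i n + a n) / 2` with
`c = i 2 + a 2`. Then `i (n + 4) - i (n + 3) = (i (n + 1) - (i n + a n) / 2) / 2`, which is
nonnegative as soon as `a n ≤ i n ≤ i (n + 1)`; and `a (n + 1) ≤ i n ≤ i (n + 1)` propagates
`a ≤ i`. So the pair of inequalities `a n ≤ i n`, `i n ≤ i (n + 1)` passes from `n` and `n + 2` to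
`n + 3`, and it holds for `n = 1, 2, 3` by computation.
-/

section

variable {K : Type*} [Field K] [LinearOrder K] [IsStrictOrderedRing K] {i a : ℕ → K} {c : K}

theorem le_and_le_succ_add_three
    (hA : ∀ n, 1 ≤ n → a (n + 1) = (i n + a n) / 2)
    (hI : ∀ n, 1 ≤ n → i (n + 3) = (c + i n + a n) / 2)
    {n : ℕ} (hn : 1 ≤ n)
    (h₀ : a n ≤ i n ∧ i n ≤ i (n + 1)) (h₂ : a (n + 2) ≤ i (n + 2) ∧ i (n + 2) ≤ i (n + 3)) :
    a (n + 3) ≤ i (n + 3) ∧ i (n + 3) ≤ i (n + 4) := by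
  constructor
  · rw [hA (n + 2) (by omega)]
    linarith [h₂.1, h₂.2]
  · rw [hI n hn, hI (n + 1) (by omega), hA n hn]
    linarith [h₀.1, h₀.2]

theorem le_and_le_succ_of_base
    (hA : ∀ n, 1 ≤ n → a (n + 1) = (i n + a n) / 2)
    (hI : ∀ n, 1 ≤ n → i (n + 3) = (c + i n + a n) / 2)
    (h₁ : a 1 ≤ i 1 ∧ i 1 ≤ i 2) (h₂ : a 2 ≤ i 2 ∧ i 2 ≤ i 3) (h₃ : a 3 ≤ i 3 ∧ i 3 ≤ i 4) :
    ∀ n, 1 ≤ n → a n ≤ i n ∧ i n ≤ i (n + 1) := by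
  intro n
  induction n using Nat.strong_induction_on with
  | _ n ih =>
    intro hn
    match n, hn with
    | 1, _ => exact h₁
    | 2, _ => exact h₂
    | 3, _ => exact h₃
    | m + 4, _ =>
      exact le_and_le_succ_add_three hA hI (by omega)
        (ih (m + 1) (by omega) (by omega)) (ih (m + 3) (by omega) (by omega))

end

theorem stmt_8_general
    (i a : ℕ → ℚ)
    (hi1 : i 1 = 1) (ha1 : a 1 = 0)
    (ha : ∀ n : ℕ, 2 ≤ n → a n = (i (n - 1) + a (n - 1)) / 2)
    (hi23 : ∀ n : ℕ, 2 ≤ n → n ≤ 3 → i n = i (n - 1))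
    (hi4 : i 4 = (i 1 + a 1 + i 2 + a 2) / 2)
    (hi5 : ∀ n : ℕ, 5 ≤ n → i n = (i 2 + a 2 + i (n - 3) + a (n - 3)) / 2) :
    ∀ n : ℕ, 1 ≤ n → i (n + 1) ≥ i n := by
  have hA : ∀ n, 1 ≤ n → a (n + 1) = (i n + a n) / 2 := fun n hn => by
    simpa using ha (n + 1) (by omega)
  have hI : ∀ n, 1 ≤ n → i (n + 3) = (i 2 + a 2 + i n + a n) / 2 := by
    rintro (_ | _ | n) hn
    · omega
    · rw [hi4]; ring
    · simpa using hi5 (n + 5) (by omega)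
  have hi2 : i 2 = 1 := by simpa [hi1] using hi23 2
  have hi3 : i 3 = 1 := by simpa [hi2] using hi23 3
  have ha2 : a 2 = 1 / 2 := by rw [hA 1 le_rfl, hi1, ha1]; norm_num
  have ha3 : a 3 = 3 / 4 := by rw [hA 2 (by norm_num), hi2, ha2]; norm_num
  have hi4' : i 4 = 5 / 4 := by rw [hi4, hi1, ha1, hi2, ha2]; norm_num
  intro n hn
  refine (le_and_le_succ_of_base hA hI ?_ ?_ ?_ n hn).2
  · norm_num [ha1, hi1, hi2]
  · norm_num [ha2, hi2, hi3]
  · norm_num [ha3, hi3, hi4']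

theorem stmt_8
    (i a : ℕ → ℚ)
    (ha0 : a 0 = 0) (hi1 : i 1 = 1) (ha1 : a 1 = 0)
    (ha : ∀ n : ℕ, 2 ≤ n → a n = (i (n - 1) + a (n - 1)) / 2)
    (hi23 : ∀ n : ℕ, 2 ≤ n → n ≤ 3 → i n = i (n - 1))
    (hi4 : i 4 = (i 1 + a 1 + i 2 + a 2) / 2)
    (hi5 : ∀ n : ℕ, 5 ≤ n → i n = (i 2 + a 2 + i (n - 3) + a (n - 3)) / 2) :
    ∀ n : ℕ, 1 ≤ n → i (n + 1) ≥ i n :=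
  stmt_8_general i a hi1 ha1 ha hi23 hi4 hi5
end

section
/- For all positive integers n, i(n) ≥ a(n). -/
/-!
Write `s n = i n + a n` and `e n = i n - a n`. Since `a (n + 1) = s n / 2`, we have
`e n = s n - s (n - 1)` for `n ≥ 2`, and the recurrence for `i` (which at `n = 4` is the same
formula) turns this into `e (n + 2) = 3/4 - (e n + e (n + 1)) / 2` for `n ≥ 2`. A value of this
recurrence is `3/4` minus the average of two values in `[0, 3/4]`, so it stays in `[0, 3/4]`
once `e 2 = 1/2` and `e 3 = 1/4` are.
-/

open Set

theorem mem_Icc_of_eq_sub_average {α : Type*} [Field α] [LinearOrder α] [IsStrictOrderedRing α]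
    {c : α} {e : ℕ → α} (h0 : e 0 ∈ Icc 0 c) (h1 : e 1 ∈ Icc 0 c)
    (hrec : ∀ n, e (n + 2) = c - (e n + e (n + 1)) / 2) (n : ℕ) : e n ∈ Icc 0 c := by
  induction n using Nat.twoStepInduction with
  | zero => exact h0
  | one => exact h1
  | more n ih ih' =>
    obtain ⟨hn, hn'⟩ := ih
    obtain ⟨hn1, hn1'⟩ := ih'
    rw [hrec]
    constructor <;> linarith

theorem stmt_9_general
    (i a : ℕ → ℚ)
    (hi1 : i 1 = 1) (ha1 : a 1 = 0)
    (ha : ∀ n : ℕ, 2 ≤ n → a n = (i (n - 1) + a (n - 1)) / 2)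
    (hi23 : ∀ n : ℕ, 2 ≤ n → n ≤ 3 → i n = i (n - 1))
    (hi4 : i 4 = (i 1 + a 1 + i 2 + a 2) / 2)
    (hi5 : ∀ n : ℕ, 5 ≤ n → i n = (i 2 + a 2 + i (n - 3) + a (n - 3)) / 2) :
    ∀ n : ℕ, 1 ≤ n → i n ≥ a n := by
  have ha' (k : ℕ) : a (k + 2) = (i (k + 1) + a (k + 1)) / 2 := by simpa using ha (k + 2) (by omega)
  have hi' (k : ℕ) : i (k + 4) = (i 2 + a 2 + i (k + 1) + a (k + 1)) / 2 := by
    rcases k with _ | k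
    · rw [hi4]; ring
    · simpa using hi5 (k + 5) (by omega)
  have hi2 : i 2 = 1 := by simpa [hi1] using hi23 2 le_rfl (by norm_num)
  have hi3 : i 3 = 1 := by simpa [hi2] using hi23 3 (by norm_num) le_rfl
  have ha2 : a 2 = 1 / 2 := by rw [ha' 0]; norm_num [hi1, ha1]
  have ha3 : a 3 = 3 / 4 := by rw [ha' 1]; norm_num [hi2, ha2]
  have hbound := mem_Icc_of_eq_sub_average (c := (3 / 4 : ℚ)) (e := fun k ↦ i (k + 2) - a (k + 2))
    (by norm_num [hi2, ha2]) (by norm_num [hi3, ha3])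
    (fun k ↦ by linarith [ha' k, ha' (k + 1), ha' (k + 2), hi' k])
  rintro (_ | _ | k) hn
  · omega
  · simp [hi1, ha1]
  · exact sub_nonneg.mp (hbound k).1

theorem stmt_9
    (i a : ℕ → ℚ)
    (ha0 : a 0 = 0) (hi1 : i 1 = 1) (ha1 : a 1 = 0)
    (ha : ∀ n : ℕ, 2 ≤ n → a n = (i (n - 1) + a (n - 1)) / 2)
    (hi23 : ∀ n : ℕ, 2 ≤ n → n ≤ 3 → i n = i (n - 1))
    (hi4 : i 4 = (i 1 + a 1 + i 2 + a 2) / 2)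
    (hi5 : ∀ n : ℕ, 5 ≤ n → i n = (i 2 + a 2 + i (n - 3) + a (n - 3)) / 2) :
    ∀ n : ℕ, 1 ≤ n → i n ≥ a n :=
  stmt_9_general i a hi1 ha1 ha hi23 hi4 hi5
end

section
/- For all positive integers n, a(n) ≥ o(n). -/
/-!
Write `s n = i n + a n`. From index 5 on, `i (n + 1) - i n` is half of `s (n - 2) - s (n - 3)`,
while `s (n + 1) - s n = (i (n + 1) - i n) + (s n - s (n - 1)) / 2`; so a joint induction, started
from the first few values, shows that `i` and `s` are nondecreasing from index 1. A sequence
that averages itself with a nondecreasing one stays below it, whence `a ≤ i`; and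
`a (n + 1) - o (n + 1) = ((i n - a n) + (a n - o n)) / 2` then propagates `o ≤ a` from `o 1 = a 1`.
-/

section AveragingRecurrences

variable {K : Type*} [Field K] [LinearOrder K] [IsStrictOrderedRing K]

theorem le_of_monotone_of_succ_eq_avg {x u : ℕ → K} (hu : Monotone u)
    (hx : ∀ n, x (n + 1) = (u n + x n) / 2) (h₀ : x 0 ≤ u 0) (n : ℕ) : x n ≤ u n := by
  induction n with
  | zero => exact h₀
  | succ n ih =>
    have := hu n.le_succ
    rw [hx]
    linarith

theorem le_of_le_of_succ_eq_avg {x y u : ℕ → K} (hxu : ∀ n, x n ≤ u n)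
    (hx : ∀ n, x (n + 1) = (u n + x n) / 2) (hy : ∀ n, y (n + 1) = (y n + x n) / 2)
    (h₀ : y 0 ≤ x 0) (n : ℕ) : y n ≤ x n := by
  induction n with
  | zero => exact h₀
  | succ n ih =>
    have := hxu n
    rw [hx, hy]
    linarith

theorem monotone_of_delayed_avg {I A : ℕ → K} (c : K)
    (hA : ∀ n, A (n + 1) = (I n + A n) / 2)
    (hI : ∀ n, I (n + 4) = (c + I (n + 1) + A (n + 1)) / 2)
    (hI₀ : ∀ n ≤ 3, I n ≤ I (n + 1)) (hS₀ : I 0 + A 0 ≤ I 1 + A 1) : Monotone I := by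
  suffices h : ∀ n, I n ≤ I (n + 1) ∧ I n + A n ≤ I (n + 1) + A (n + 1) from
    monotone_nat_of_le_succ fun n ↦ (h n).1
  intro n
  induction n using Nat.strong_induction_on with
  | _ n ih =>
    rcases n with _ | n
    · exact ⟨hI₀ 0 (by omega), hS₀⟩
    have hIstep : I (n + 1) ≤ I (n + 2) := by
      by_cases hn : n + 1 ≤ 3
      · exact hI₀ (n + 1) hn
      · obtain ⟨m, rfl⟩ : ∃ m, n = m + 3 := ⟨n - 3, by omega⟩
        have hS := (ih (m + 1) (by omega)).2
        rw [hI (m + 1), hI m]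
        linarith
    have hSprev := (ih n (by omega)).2
    refine ⟨hIstep, ?_⟩
    rw [hA (n + 1)]
    linarith [hA n]

end AveragingRecurrences

theorem stmt_10_general
    (i a : ℕ → ℚ)
    (hi1 : i 1 = 1) (ha1 : a 1 = 0)
    (ha : ∀ n : ℕ, 2 ≤ n → a n = (i (n - 1) + a (n - 1)) / 2)
    (hi23 : ∀ n : ℕ, 2 ≤ n → n ≤ 3 → i n = i (n - 1))
    (hi4 : i 4 = (i 1 + a 1 + i 2 + a 2) / 2)
    (hi5 : ∀ n : ℕ, 5 ≤ n → i n = (i 2 + a 2 + i (n - 3) + a (n - 3)) / 2)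
    (o : ℕ → ℚ)
    (ho1 : o 1 = 0)
    (ho : ∀ n : ℕ, 2 ≤ n → o n = (o (n - 1) + a (n - 1)) / 2) :
    ∀ n : ℕ, 1 ≤ n → a n ≥ o n := by
  have ha_rec (n : ℕ) : a (n + 2) = (i (n + 1) + a (n + 1)) / 2 := ha (n + 2) (by omega)
  have hi_rec (n : ℕ) : i (n + 5) = (i 2 + a 2 + i (n + 2) + a (n + 2)) / 2 := hi5 (n + 5) (by omega)
  have hi2 : i 2 = 1 := by rw [hi23 2 le_rfl (by norm_num), hi1]
  have hi3 : i 3 = 1 := by rw [hi23 3 (by norm_num) le_rfl, hi2]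
  have ha2 : a 2 = 1 / 2 := by rw [ha_rec 0, hi1, ha1]; norm_num
  have hi4_val : i 4 = 5 / 4 := by rw [hi4, hi1, ha1, hi2, ha2]; norm_num
  have hi5_val : i 5 = 3 / 2 := by rw [hi_rec 0, hi2, ha2]; norm_num
  have hmono : Monotone fun n ↦ i (n + 1) :=
    monotone_of_delayed_avg (I := fun n ↦ i (n + 1)) (A := fun n ↦ a (n + 1)) (i 2 + a 2)
      ha_rec hi_rec
      (by intro n hn; interval_cases n <;> norm_num [hi1, hi2, hi3, hi4_val, hi5_val])
      (by norm_num [hi1, ha1, hi2, ha2])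
  have hai : ∀ n, a (n + 1) ≤ i (n + 1) :=
    le_of_monotone_of_succ_eq_avg hmono ha_rec (by norm_num [hi1, ha1])
  have hoa : ∀ n, o (n + 1) ≤ a (n + 1) :=
    le_of_le_of_succ_eq_avg hai ha_rec (fun n ↦ ho (n + 2) (by omega)) (by rw [ho1, ha1])
  intro n hn
  obtain ⟨m, rfl⟩ : ∃ m, n = m + 1 := ⟨n - 1, by omega⟩
  exact hoa m

theorem stmt_10
    (i a : ℕ → ℚ)
    (ha0 : a 0 = 0) (hi1 : i 1 = 1) (ha1 : a 1 = 0)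
    (ha : ∀ n : ℕ, 2 ≤ n → a n = (i (n - 1) + a (n - 1)) / 2)
    (hi23 : ∀ n : ℕ, 2 ≤ n → n ≤ 3 → i n = i (n - 1))
    (hi4 : i 4 = (i 1 + a 1 + i 2 + a 2) / 2)
    (hi5 : ∀ n : ℕ, 5 ≤ n → i n = (i 2 + a 2 + i (n - 3) + a (n - 3)) / 2)
    (o : ℕ → ℚ)
    (ho0 : o 0 = 0) (ho1 : o 1 = 0)
    (ho : ∀ n : ℕ, 2 ≤ n → o n = (o (n - 1) + a (n - 1)) / 2) :
    ∀ n : ℕ, 1 ≤ n → a n ≥ o n :=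
  stmt_10_general i a hi1 ha1 ha hi23 hi4 hi5 o ho1 ho
end

section
/- For all positive integers n, a(n) ≥ a(n-1), i.e., the sequence a is monotone nondecreasing. -/
/-! With `d n = i n - a n`, the recursion gives `a (n + 1) - a n = d n / 2` for `n ≥ 1`, so it suffices
that `d n ≥ 0`. Since `i 2 + a 2 = 3 / 2`, unfolding `a` three times turns the definition of `i n` for
`n ≥ 5` into the linear recurrence `d n = 3 / 4 - (d (n - 1) + d (n - 2)) / 2`, which maps
`[1/4, 1/2]²` into `[1/4, 1/2]`; the initial gaps `d 3 = 1/4` and `d 4 = 3/8` lie in that interval. -/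

theorem forall_mem_Icc_of_recurrence {K : Type*} [Field K] [LinearOrder K] [IsStrictOrderedRing K]
    (d : ℕ → K) (hrec : ∀ n, d (n + 2) = 3 / 4 - (d (n + 1) + d n) / 2)
    (h0 : d 0 ∈ Set.Icc (1 / 4 : K) (1 / 2)) (h1 : d 1 ∈ Set.Icc (1 / 4 : K) (1 / 2)) :
    ∀ n, d n ∈ Set.Icc (1 / 4 : K) (1 / 2) := by
  have pair : ∀ n, d n ∈ Set.Icc (1 / 4 : K) (1 / 2) ∧ d (n + 1) ∈ Set.Icc (1 / 4 : K) (1 / 2) := by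
    intro n
    induction n with
    | zero => exact ⟨h0, h1⟩
    | succ n ih =>
      obtain ⟨⟨hn₁, hn₂⟩, ⟨hn₁', hn₂'⟩⟩ := ih
      refine ⟨⟨hn₁', hn₂'⟩, ?_⟩
      rw [hrec]
      constructor <;> linarith
  exact fun n => (pair n).1

section

variable {i a : ℕ → ℚ}

theorem a_succ_sub_a (ha : ∀ n : ℕ, 2 ≤ n → a n = (i (n - 1) + a (n - 1)) / 2)
    (n : ℕ) (hn : 1 ≤ n) : a (n + 1) - a n = (i n - a n) / 2 := by
  rw [ha (n + 1) (by omega), Nat.add_sub_cancel]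
  ring

theorem gap_recurrence (ha : ∀ n : ℕ, 2 ≤ n → a n = (i (n - 1) + a (n - 1)) / 2)
    (hi5 : ∀ n : ℕ, 5 ≤ n → i n = (i 2 + a 2 + i (n - 3) + a (n - 3)) / 2)
    (h2 : i 2 + a 2 = 3 / 2) (n : ℕ) :
    i (n + 5) - a (n + 5) = 3 / 4 - (i (n + 4) - a (n + 4) + (i (n + 3) - a (n + 3))) / 2 := by
  have hi := hi5 (n + 5) (by omega)
  have ha5 := ha (n + 5) (by omega)
  have ha4 := ha (n + 4) (by omega)
  have ha3 := ha (n + 3) (by omega)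
  simp only [show n + 5 - 1 = n + 4 by omega, show n + 5 - 3 = n + 2 by omega, show n + 4 - 1 = n + 3 by omega,
    show n + 3 - 1 = n + 2 by omega, h2] at hi ha5 ha4 ha3
  linarith

theorem gap_nonneg (hi1 : i 1 = 1) (ha1 : a 1 = 0)
    (ha : ∀ n : ℕ, 2 ≤ n → a n = (i (n - 1) + a (n - 1)) / 2)
    (hi23 : ∀ n : ℕ, 2 ≤ n → n ≤ 3 → i n = i (n - 1))
    (hi4 : i 4 = (i 1 + a 1 + i 2 + a 2) / 2)
    (hi5 : ∀ n : ℕ, 5 ≤ n → i n = (i 2 + a 2 + i (n - 3) + a (n - 3)) / 2) (n : ℕ) (hn : 1 ≤ n) :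
    0 ≤ i n - a n := by
  have hi2 : i 2 = 1 := by rw [hi23 2 le_rfl (by norm_num), ← hi1]
  have ha2 : a 2 = 1 / 2 := by rw [ha 2 le_rfl]; norm_num [hi1, ha1]
  have hi3 : i 3 = 1 := by rw [hi23 3 (by norm_num) le_rfl, ← hi2]
  have ha3 : a 3 = 3 / 4 := by rw [ha 3 (by norm_num)]; norm_num [hi2, ha2]
  have ha4 : a 4 = 7 / 8 := by rw [ha 4 (by norm_num)]; norm_num [hi3, ha3]
  have hd4 : i 4 - a 4 = 3 / 8 := by rw [hi4, ha4]; norm_num [hi1, ha1, hi2, ha2]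
  have h2 : i 2 + a 2 = 3 / 2 := by rw [hi2, ha2]; norm_num
  have bounded := forall_mem_Icc_of_recurrence (fun n => i (n + 3) - a (n + 3))
    (gap_recurrence ha hi5 h2) (by norm_num [hi3, ha3]) (by norm_num [hd4])
  match n, hn with
  | 1, _ => norm_num [hi1, ha1]
  | 2, _ => norm_num [hi2, ha2]
  | m + 3, _ => exact le_trans (by norm_num) (bounded m).1

end

theorem stmt_11
    (i a : ℕ → ℚ)
    (ha0 : a 0 = 0) (hi1 : i 1 = 1) (ha1 : a 1 = 0)
    (ha : ∀ n : ℕ, 2 ≤ n → a n = (i (n - 1) + a (n - 1)) / 2)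
    (hi23 : ∀ n : ℕ, 2 ≤ n → n ≤ 3 → i n = i (n - 1))
    (hi4 : i 4 = (i 1 + a 1 + i 2 + a 2) / 2)
    (hi5 : ∀ n : ℕ, 5 ≤ n → i n = (i 2 + a 2 + i (n - 3) + a (n - 3)) / 2) :
    ∀ n : ℕ, 1 ≤ n → a n ≥ a (n - 1) := by
  rintro (_ | _ | m) hn
  · omega
  · simp [ha0, ha1]
  · have step := a_succ_sub_a ha (m + 1) (by omega)
    have gap := gap_nonneg hi1 ha1 ha hi23 hi4 hi5 (m + 1) (by omega)
    simp only [Nat.add_sub_cancel]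
    linarith
end

section
/- For all nonnegative integers m and positive integers n with m < n, o(n) ≥ (o(m) + a(m) + o(n-m-1) + a(n-m-1))/2. -/
/-!
With `t = i + a` and `s = o + a`, the recursion reads `o (n + 1) = s n / 2`, so the claim is the
superadditivity of `s`. The sequence `t` satisfies `t (n + 4) = 3/4 + (t (n + 3) + t (n + 1)) / 2`;
its deviation `φ` from the line `3n/8 + 21/32` satisfies `φ (n + 2) = -(φ (n + 1) + φ n) / 2`,
a recurrence that halves the positive definite form `x² + xy + 2y²`, whence
`|φ (n + 1) - φ n| ≤ 1/8`. Solving `s (n + 2) = (s (n + 1) + t (n + 1)) / 2` exactly then puts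
`s n` within `1/32` of `3n/8 - 3/32 - 2^(-n-1)` for `n ≥ 1`, and this approximation exceeds
superadditivity by `3/32 + 2^(-p-1) + 2^(-q-1) - 2^(-p-q-1)`, which covers the three errors.
-/

section DampedRecurrence

variable {K : Type*} [Field K] [LinearOrder K] [IsStrictOrderedRing K]

def dampedEnergy (x : ℕ → K) (n : ℕ) : K := x n ^ 2 + x n * x (n + 1) + 2 * x (n + 1) ^ 2

lemma dampedEnergy_succ {x : ℕ → K} (hx : ∀ n, x (n + 2) = -(x (n + 1) + x n) / 2) (n : ℕ) :
    dampedEnergy x (n + 1) = dampedEnergy x n / 2 := by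
  simp only [dampedEnergy, hx]
  ring

lemma dampedEnergy_eq {x : ℕ → K} (hx : ∀ n, x (n + 2) = -(x (n + 1) + x n) / 2) (n : ℕ) :
    dampedEnergy x n = dampedEnergy x 0 / 2 ^ n := by
  induction n with
  | zero => simp
  | succ n ih => rw [dampedEnergy_succ hx, ih, pow_succ, div_div]

lemma sq_sub_le_four_mul_dampedEnergy (x : ℕ → K) (n : ℕ) :
    (x (n + 1) - x n) ^ 2 ≤ 4 * dampedEnergy x n := by
  unfold dampedEnergy
  nlinarith [sq_nonneg (x n + x (n + 1)), sq_nonneg (x (n + 1))]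

end DampedRecurrence

structure IsTSequence (t : ℕ → ℚ) : Prop where
  one : t 1 = 1
  two : t 2 = 3 / 2
  three : t 3 = 7 / 4
  add_four : ∀ n, t (n + 4) = (t 2 + t (n + 1) + t (n + 3)) / 2

-- `fluct t n` is the deviation of `t (n + 1)`. Every line `3n/8 + c` solves the recurrence of `t`;
-- `c = 21/32` leaves no component along the eigenvalue `1`, only the roots of `x² + x/2 + 1/2`.
def fluct (t : ℕ → ℚ) (n : ℕ) : ℚ := t (n + 1) - 3 * (n + 1) / 8 - 21 / 32

namespace IsTSequence

variable {t : ℕ → ℚ}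

lemma fluct_zero (ht : IsTSequence t) : fluct t 0 = -1 / 32 := by
  norm_num [fluct, ht.one]

lemma fluct_one (ht : IsTSequence t) : fluct t 1 = 3 / 32 := by
  norm_num [fluct, ht.two]

lemma fluct_rec (ht : IsTSequence t) (n : ℕ) :
    fluct t (n + 2) = -(fluct t (n + 1) + fluct t n) / 2 := by
  induction n with
  | zero => norm_num [fluct, ht.one, ht.two, ht.three]
  | succ n ih =>
    have h := ht.add_four n
    rw [ht.two] at h
    simp only [fluct] at ih ⊢
    push_cast at ih ⊢
    linarith

lemma abs_fluct_succ_sub_le (ht : IsTSequence t) (n : ℕ) :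
    |fluct t (n + 1) - fluct t n| ≤ 1 / 8 := by
  match n with
  | 0 => rw [ht.fluct_one, ht.fluct_zero]; norm_num
  | 1 => rw [ht.fluct_rec 0, ht.fluct_one, ht.fluct_zero]; norm_num
  | n + 2 =>
    have h0 : dampedEnergy (fluct t) 0 = 1 / 64 := by
      rw [dampedEnergy, ht.fluct_zero, ht.fluct_one]; norm_num
    have hpow : (4 : ℚ) ≤ 2 ^ (n + 2) := by
      calc (4 : ℚ) = 2 ^ 2 := by norm_num
        _ ≤ 2 ^ (n + 2) := pow_le_pow_right₀ (by norm_num) (by omega)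
    apply abs_le_of_sq_le_sq _ (by norm_num)
    calc (fluct t (n + 2 + 1) - fluct t (n + 2)) ^ 2
        ≤ 4 * dampedEnergy (fluct t) (n + 2) := sq_sub_le_four_mul_dampedEnergy _ _
      _ = 1 / 16 / 2 ^ (n + 2) := by rw [dampedEnergy_eq ht.fluct_rec, h0]; ring
      _ ≤ (1 / 8) ^ 2 := by rw [div_le_iff₀ (by positivity)]; nlinarith

end IsTSequence

def sApprox (n : ℕ) : ℚ := 3 * n / 8 - 3 / 32 - (1 / 2) ^ (n + 1)

section

variable {t s : ℕ → ℚ}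

lemma s_eq_sApprox_sub (ht : IsTSequence t) (hs1 : s 1 = 0)
    (hs : ∀ n, s (n + 2) = (s (n + 1) + t (n + 1)) / 2) (n : ℕ) :
    s (n + 2) = sApprox (n + 2) - (fluct t (n + 1) - fluct t n) / 4 := by
  induction n with
  | zero => rw [hs, hs1, ht.one, ht.fluct_one, ht.fluct_zero, sApprox]; norm_num
  | succ n ih =>
    rw [hs, ih, ht.fluct_rec]
    simp only [sApprox, fluct]
    push_cast
    ring

lemma abs_s_sub_sApprox_le (ht : IsTSequence t) (hs1 : s 1 = 0)
    (hs : ∀ n, s (n + 2) = (s (n + 1) + t (n + 1)) / 2) (n : ℕ) :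
    |s (n + 1) - sApprox (n + 1)| ≤ 1 / 32 := by
  cases n with
  | zero => rw [hs1, sApprox]; norm_num
  | succ n =>
    rw [s_eq_sApprox_sub ht hs1 hs, sub_sub_cancel_left, abs_neg, abs_div]
    have := ht.abs_fluct_succ_sub_le n
    rw [abs_of_pos (by norm_num : (0 : ℚ) < 4)]
    linarith

lemma s_superadditive (ht : IsTSequence t) (hs0 : s 0 = 0) (hs1 : s 1 = 0)
    (hs : ∀ n, s (n + 2) = (s (n + 1) + t (n + 1)) / 2) (p q : ℕ) :
    s p + s q ≤ s (p + q) := by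
  match p, q with
  | 0, q => simp [hs0]
  | p, 0 => simp [hs0]
  | p + 1, q + 1 =>
    have hp := abs_le.1 (abs_s_sub_sApprox_le ht hs1 hs p)
    have hq := abs_le.1 (abs_s_sub_sApprox_le ht hs1 hs q)
    have hpq := abs_le.1 (abs_s_sub_sApprox_le ht hs1 hs (p + q + 1))
    have hpow : (1 / 2 : ℚ) ^ (p + q + 1 + 1 + 1) ≤ (1 / 2) ^ (p + 1 + 1) :=
      pow_le_pow_of_le_one (by norm_num) (by norm_num) (by omega)
    have hq0 : (0 : ℚ) ≤ (1 / 2) ^ (q + 1 + 1) := by positivity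
    rw [show p + 1 + (q + 1) = p + q + 1 + 1 by omega]
    simp only [sApprox] at hp hq hpq
    push_cast at hp hq hpq
    linarith

end

lemma isTSequence_add {i a : ℕ → ℚ} (hi1 : i 1 = 1) (ha1 : a 1 = 0)
    (ha : ∀ n : ℕ, 2 ≤ n → a n = (i (n - 1) + a (n - 1)) / 2)
    (hi23 : ∀ n : ℕ, 2 ≤ n → n ≤ 3 → i n = i (n - 1))
    (hi4 : i 4 = (i 1 + a 1 + i 2 + a 2) / 2)
    (hi5 : ∀ n : ℕ, 5 ≤ n → i n = (i 2 + a 2 + i (n - 3) + a (n - 3)) / 2) :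
    IsTSequence (fun n => i n + a n) := by
  have ha_succ (n : ℕ) : a (n + 2) = (i (n + 1) + a (n + 1)) / 2 := by
    simpa using ha (n + 2) (by omega)
  have hi2 : i 2 = 1 := by simpa [hi1] using hi23 2 le_rfl (by norm_num)
  have hi3 : i 3 = 1 := by simpa [hi2] using hi23 3 (by norm_num) le_rfl
  have ha2 : a 2 = 1 / 2 := by rw [ha_succ 0, hi1, ha1]; norm_num
  refine ⟨by simp [hi1, ha1], by norm_num [hi2, ha2], ?_, ?_⟩
  · simp only [ha_succ 1, hi2, hi3, ha2]; norm_num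
  · rintro (_ | n)
    · rw [ha_succ 2, hi4]; ring
    · rw [ha_succ (n + 3), hi5 (n + 5) (by omega)]
      simp only [show n + 5 - 3 = n + 2 by omega, show n + 3 + 1 = n + 1 + 3 by omega]
      ring

theorem stmt_12
    (i a : ℕ → ℚ)
    (ha0 : a 0 = 0) (hi1 : i 1 = 1) (ha1 : a 1 = 0)
    (ha : ∀ n : ℕ, 2 ≤ n → a n = (i (n - 1) + a (n - 1)) / 2)
    (hi23 : ∀ n : ℕ, 2 ≤ n → n ≤ 3 → i n = i (n - 1))
    (hi4 : i 4 = (i 1 + a 1 + i 2 + a 2) / 2)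
    (hi5 : ∀ n : ℕ, 5 ≤ n → i n = (i 2 + a 2 + i (n - 3) + a (n - 3)) / 2)
    (o : ℕ → ℚ)
    (ho0 : o 0 = 0) (ho1 : o 1 = 0)
    (ho : ∀ n : ℕ, 2 ≤ n → o n = (o (n - 1) + a (n - 1)) / 2) :
    ∀ m n : ℕ, 1 ≤ n → m < n →
      o n ≥ (o m + a m + o (n - m - 1) + a (n - m - 1)) / 2 := by
  have ho_succ : ∀ n, o (n + 1) = (o n + a n) / 2 := by
    rintro (_ | n)
    · simp [ho0, ho1, ha0]
    · simpa using ho (n + 2) (by omega)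
  have hs : ∀ n, o (n + 2) + a (n + 2) =
      (o (n + 1) + a (n + 1) + (i (n + 1) + a (n + 1))) / 2 := by
    intro n
    rw [ho_succ (n + 1), ha (n + 2) (by omega), show n + 2 - 1 = n + 1 by omega]
    ring
  have hsup := s_superadditive (s := fun n => o n + a n)
    (isTSequence_add hi1 ha1 ha hi23 hi4 hi5) (by simp [ho0, ha0]) (by simp [ho1, ha1]) hs
  intro m n _ hmn
  obtain ⟨k, rfl⟩ : ∃ k, n = m + k + 1 := ⟨n - m - 1, by omega⟩
  rw [show m + k + 1 - m - 1 = k by omega, ho_succ, ge_iff_le]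
  linarith [hsup m k]
end

section
/- For all nonnegative integers m and positive integers n with m < n and n - m - 1 ≥ 1, a(n) ≥ (o(m) + a(m) + i(n-m-1) + a(n-m-1))/2. -/
/-! Write `s = i + a` and `t = o + a`; since `a n = s (n - 1) / 2`, the claim is
`t m + s k ≤ s (m + k)` for `k ≥ 1`. For `n ≥ 5`, `s n = (s (n - 1) + s (n - 3)) / 2 + 3 / 4`, so both
`s n - 3 n / 8` and, for fixed `m`, `s (m + k) - s k - t m` satisfy the averaging recurrence
`f (n + 5) = (f (n + 4) + f (n + 2)) / 2`, which propagates lower bounds from `1 ≤ n ≤ 4`. This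
gives `5 / 8 ≤ s n - 3 n / 8 ≤ 3 / 4` and reduces the claim to `k ≤ 4`, which follows by induction
on `m` from `t (m + 2) = (t (m + 1) + s (m + 1)) / 2` and the linear bounds on `s`. -/

theorem le_of_avg_rec {K : Type*} [Field K] [LinearOrder K] [IsStrictOrderedRing K]
    {f : ℕ → K} {c : K} (hf : ∀ n, f (n + 5) = (f (n + 4) + f (n + 2)) / 2)
    (hbase : ∀ n, 1 ≤ n → n ≤ 4 → c ≤ f n) {n : ℕ} (hn : 1 ≤ n) : c ≤ f n := by
  induction n using Nat.strong_induction_on with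
  | _ n ih =>
    rcases le_or_gt n 4 with h4 | h4
    · exact hbase n hn h4
    · obtain ⟨j, rfl⟩ : ∃ j, n = j + 5 := ⟨n - 5, by omega⟩
      rw [hf]
      linarith [ih (j + 4) (by omega) (by omega), ih (j + 2) (by omega) (by omega)]

structure IsSumSeq (s : ℕ → ℚ) : Prop where
  one : s 1 = 1
  two : s 2 = 3 / 2
  three : s 3 = 7 / 4
  four : s 4 = 17 / 8
  add_five : ∀ n, s (n + 5) = (s (n + 4) + s (n + 2)) / 2 + 3 / 4

namespace IsSumSeq

variable {s : ℕ → ℚ}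

theorem lower_bound (hs : IsSumSeq s) {n : ℕ} (hn : 1 ≤ n) : 3 * n / 8 + 5 / 8 ≤ s n := by
  have := le_of_avg_rec (f := fun n => s n - 3 * n / 8) (c := 5 / 8)
    (fun n => by push_cast; rw [hs.add_five]; ring)
    (fun n h1 h4 => by interval_cases n <;> norm_num [hs.one, hs.two, hs.three, hs.four]) hn
  linarith

theorem upper_bound (hs : IsSumSeq s) {n : ℕ} (hn : 1 ≤ n) : s n ≤ 3 * n / 8 + 3 / 4 := by
  have := le_of_avg_rec (f := fun n => 3 * n / 8 - s n) (c := -3 / 4)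
    (fun n => by push_cast; rw [hs.add_five]; ring)
    (fun n h1 h4 => by interval_cases n <;> norm_num [hs.one, hs.two, hs.three, hs.four]) hn
  linarith

theorem add_add_le_two_mul (hs : IsSumSeq s) {m k : ℕ} (hm : 1 ≤ m) (hk1 : 1 ≤ k) (hk4 : k ≤ 4) :
    s m + s k + s (m + k) ≤ 2 * s (m + k + 1) := by
  have h1 := hs.one; have h2 := hs.two; have h3 := hs.three; have h4 := hs.four
  interval_cases k
  · rcases (show m = 1 ∨ m = 2 ∨ 3 ≤ m by omega) with rfl | rfl | hm3
    · norm_num [h1, h2, h3]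
    · norm_num [h1, h2, h3, h4]
    · obtain ⟨j, rfl⟩ := Nat.exists_eq_add_of_le' hm3
      have := hs.add_five j
      have := hs.upper_bound (n := j + 3) (by omega)
      have := hs.lower_bound (n := j + 2) (by omega)
      simp only [add_assoc, Nat.reduceAdd] at *
      push_cast at *
      linarith
  · rcases (show m = 1 ∨ 2 ≤ m by omega) with rfl | hm2
    · norm_num [h1, h2, h3, h4]
    · obtain ⟨j, rfl⟩ := Nat.exists_eq_add_of_le' hm2
      have := hs.add_five j
      simp only [add_assoc, Nat.reduceAdd] at *
      linarith
  · obtain ⟨j, rfl⟩ := Nat.exists_eq_add_of_le' hm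
    have := hs.add_five j
    have := hs.upper_bound (n := j + 1) (by omega)
    have := hs.lower_bound (n := j + 2) (by omega)
    simp only [add_assoc, Nat.reduceAdd] at *
    push_cast at *
    linarith
  · obtain ⟨j, rfl⟩ := Nat.exists_eq_add_of_le' hm
    have := hs.add_five (j + 1)
    have := hs.upper_bound (n := j + 1) (by omega)
    have := hs.lower_bound (n := j + 3) (by omega)
    simp only [add_assoc, Nat.reduceAdd] at *
    push_cast at *
    linarith

variable {t : ℕ → ℚ}

theorem add_le_of_le_four (hs : IsSumSeq s) (ht0 : t 0 = 0) (ht1 : t 1 = 0)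
    (ht : ∀ n, t (n + 2) = (t (n + 1) + s (n + 1)) / 2) {k : ℕ} (hk1 : 1 ≤ k) (hk4 : k ≤ 4) :
    ∀ m, t m + s k ≤ s (m + k)
  | 0 => by simp [ht0]
  | 1 => by
    have := hs.upper_bound hk1
    have := hs.lower_bound (n := k + 1) (by omega)
    push_cast at *
    rw [ht1, add_comm 1 k]
    linarith
  | m + 2 => by
    have := add_le_of_le_four hs ht0 ht1 ht hk1 hk4 (m + 1)
    have := hs.add_add_le_two_mul (m := m + 1) (by omega) hk1 hk4
    rw [ht, show m + 2 + k = m + 1 + k + 1 by omega]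
    linarith

theorem add_le (hs : IsSumSeq s) (ht0 : t 0 = 0) (ht1 : t 1 = 0)
    (ht : ∀ n, t (n + 2) = (t (n + 1) + s (n + 1)) / 2) (m : ℕ) {k : ℕ} (hk : 1 ≤ k) :
    t m + s k ≤ s (m + k) := by
  have := le_of_avg_rec (f := fun k => s (m + k) - s k - t m) (c := 0)
    (fun n => by simp only [← add_assoc, hs.add_five]; ring)
    (fun k hk1 hk4 => by linarith [hs.add_le_of_le_four ht0 ht1 ht hk1 hk4 m]) hk
  linarith

end IsSumSeq

theorem stmt_13
    (i a : ℕ → ℚ)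
    (ha0 : a 0 = 0) (hi1 : i 1 = 1) (ha1 : a 1 = 0)
    (ha : ∀ n : ℕ, 2 ≤ n → a n = (i (n - 1) + a (n - 1)) / 2)
    (hi23 : ∀ n : ℕ, 2 ≤ n → n ≤ 3 → i n = i (n - 1))
    (hi4 : i 4 = (i 1 + a 1 + i 2 + a 2) / 2)
    (hi5 : ∀ n : ℕ, 5 ≤ n → i n = (i 2 + a 2 + i (n - 3) + a (n - 3)) / 2)
    (o : ℕ → ℚ)
    (ho0 : o 0 = 0) (ho1 : o 1 = 0)
    (ho : ∀ n : ℕ, 2 ≤ n → o n = (o (n - 1) + a (n - 1)) / 2) :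
    ∀ m n : ℕ, 1 ≤ n → m < n → 1 ≤ n - m - 1 →
      a n ≥ (o m + a m + i (n - m - 1) + a (n - m - 1)) / 2 := by
  have hi2 : i 2 = 1 := by simpa [hi1] using hi23 2 le_rfl (by norm_num)
  have ha2 : a 2 = 1 / 2 := by norm_num [ha 2 le_rfl, hi1, ha1]
  have hi3 : i 3 = 1 := by simpa [hi2] using hi23 3 (by norm_num) le_rfl
  have ha3 : a 3 = 3 / 4 := by norm_num [ha 3 (by norm_num), hi2, ha2]
  have hs : IsSumSeq (fun n => i n + a n) :=
    { one := by norm_num [hi1, ha1]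
      two := by norm_num [hi2, ha2]
      three := by norm_num [hi3, ha3]
      four := by norm_num [hi4, ha 4 (by norm_num), hi1, ha1, hi2, ha2, hi3, ha3]
      add_five := fun n => by
        rw [hi5 (n + 5) (by omega), ha (n + 5) (by omega), hi2, ha2]
        simp only [show n + 5 - 1 = n + 4 by omega, show n + 5 - 3 = n + 2 by omega]
        ring }
  have ht : ∀ n, o (n + 2) + a (n + 2) = (o (n + 1) + a (n + 1) + (i (n + 1) + a (n + 1))) / 2 := by
    intro n
    rw [ho (n + 2) (by omega), ha (n + 2) (by omega), show n + 2 - 1 = n + 1 by omega]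
    ring
  intro m n _ _ hk
  have := hs.add_le (t := fun n => o n + a n) (by simp [ho0, ha0]) (by simp [ho1, ha1]) ht m hk
  rw [ha n (by omega), show n - 1 = m + (n - m - 1) by omega]
  linarith
end

section
/- For all n ≥ 2, i(n) - a(n) = 3/8 + (8ψ(n-2) + 8ψ(n-1))/2^(n+4), and in particular i(n) - a(n) ≥ 1/8. -/
/-!
Write `s n = i n + a n`. For `n ≥ 5` the recurrences give `s n = 3/4 + (s (n-1) + s (n-3)) / 2`,
whose characteristic polynomial is `(x - 1) (2x² + x + 1)`; the roots of `2x² + x + 1` are half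
those of `x² + x + 2`, the characteristic polynomial of `ψ`. Hence `i` and `a` are each a linear
function of `n` plus a combination of `ψ n / 2ⁿ` and `ψ (n+1) / 2ⁿ`, and the difference of the two
closed forms is the claimed one. The roots of `x² + x + 2` have modulus `√2`, i.e. the norm form
`4x² + 2xy + 2y²` doubles along `(ψ m, ψ (m+1))`; since `7 (x + y)² ≤ 4 (4x² + 2xy + 2y²)`, this
gives `|ψ m + ψ (m+1)| ≤ 2^(m+1)`, which is the lower bound `1/8`.
-/

theorem norm_form_eq_two_pow_mul {R : Type*} [CommRing R] {f : ℕ → R}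
    (hf : ∀ m, f (m + 2) = -2 * f m - f (m + 1)) (m : ℕ) :
    4 * f m ^ 2 + 2 * f m * f (m + 1) + 2 * f (m + 1) ^ 2 =
      2 ^ m * (4 * f 0 ^ 2 + 2 * f 0 * f 1 + 2 * f 1 ^ 2) := by
  induction m with
  | zero => ring
  | succ k ih => rw [hf, pow_succ]; linear_combination 2 * ih

theorem seven_mul_sq_add_le {R : Type*} [CommRing R] [LinearOrder R] [IsStrictOrderedRing R]
    (x y : R) : 7 * (x + y) ^ 2 ≤ 4 * (4 * x ^ 2 + 2 * x * y + 2 * y ^ 2) := by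
  linear_combination sq_nonneg (3 * x - y)

theorem abs_add_le_two_pow {f : ℕ → ℤ} (hf : ∀ m, f (m + 2) = -2 * f m - f (m + 1))
    (h0 : f 0 = 1) (h1 : f 1 = 0) (m : ℕ) : |f m + f (m + 1)| ≤ 2 ^ (m + 1) := by
  have hQ := norm_form_eq_two_pow_mul hf m
  have h7 := seven_mul_sq_add_le (f m) (f (m + 1))
  rw [hQ, h0, h1] at h7
  have hp : (1 : ℤ) ≤ 2 ^ m := one_le_pow₀ (by norm_num)
  refine abs_le_of_sq_le_sq ?_ (by positivity)
  rw [pow_succ 2 m, mul_pow]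
  nlinarith

section ClosedForm

variable {psi : ℕ → ℤ} {i a : ℕ → ℚ}

theorem closed_forms_of_recurrences (hpsi : ∀ m, psi (m + 2) = -2 * psi m - psi (m + 1))
    (hpsi0 : psi 0 = 1) (hpsi1 : psi 1 = 0)
    (ha : ∀ m, a (m + 2) = (i (m + 1) + a (m + 1)) / 2)
    (hi : ∀ m, i (m + 5) = (i 2 + a 2 + i (m + 2) + a (m + 2)) / 2)
    (hi2 : i 2 = 1) (ha2 : a 2 = 1 / 2) (hi3 : i 3 = 1) (hi4 : i 4 = 5 / 4) :
    ∀ m : ℕ,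
      i (m + 2) = (3 * m + 6) / 16 + 33 / 64 + (7 * psi m + 5 * psi (m + 1)) / 2 ^ (m + 6) ∧
      a (m + 2) = (3 * m + 6) / 16 + 9 / 64 - (psi m + 3 * psi (m + 1)) / 2 ^ (m + 6)
  | 0 => by norm_num [hi2, ha2, hpsi0, hpsi1]
  | 1 => by norm_num [hi3, ha 1, hi2, ha2, hpsi 0, hpsi0, hpsi1]
  | 2 => by norm_num [hi4, ha 2, ha 1, hi3, hi2, ha2, hpsi 1, hpsi 0, hpsi0, hpsi1]
  | k + 3 => by
    obtain ⟨hik, hak⟩ := closed_forms_of_recurrences hpsi hpsi0 hpsi1 ha hi hi2 ha2 hi3 hi4 k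
    obtain ⟨hik2, hak2⟩ :=
      closed_forms_of_recurrences hpsi hpsi0 hpsi1 ha hi hi2 ha2 hi3 hi4 (k + 2)
    have hq : ∀ m, (psi (m + 2) : ℚ) = -2 * psi m - psi (m + 1) := fun m => by
      exact_mod_cast hpsi m
    constructor
    · rw [hi, hi2, ha2, hik, hak]
      simp only [add_assoc, Nat.reduceAdd, hq]
      push_cast
      field_simp
      ring
    · rw [ha, hik2, hak2]
      simp only [add_assoc, Nat.reduceAdd, hq]
      push_cast
      field_simp
      ring

end ClosedForm

theorem stmt_15_general
    (psi : ℕ → ℤ)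
    (hpsi0 : psi 0 = 1) (hpsi1 : psi 1 = 0)
    (hpsi : ∀ n : ℕ, 2 ≤ n → psi n = -2 * psi (n - 2) - psi (n - 1))
    (i a : ℕ → ℚ)
    (hi1 : i 1 = 1) (ha1 : a 1 = 0)
    (ha : ∀ n : ℕ, 2 ≤ n → a n = (i (n - 1) + a (n - 1)) / 2)
    (hi23 : ∀ n : ℕ, 2 ≤ n → n ≤ 3 → i n = i (n - 1))
    (hi4 : i 4 = (i 1 + a 1 + i 2 + a 2) / 2)
    (hi5 : ∀ n : ℕ, 5 ≤ n → i n = (i 2 + a 2 + i (n - 3) + a (n - 3)) / 2) :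
    ∀ n : ℕ, 2 ≤ n →
      i n - a n = 3 / 8 + (8 * (psi (n - 2) : ℚ) + 8 * psi (n - 1)) / 2 ^ (n + 4) ∧
      i n - a n ≥ 1 / 8 := by
  have hpsi_succ_succ : ∀ m, psi (m + 2) = -2 * psi m - psi (m + 1) := fun m =>
    hpsi (m + 2) (by omega)
  have hi2 : i 2 = 1 := (hi23 2 le_rfl (by norm_num)).trans hi1
  have ha2 : a 2 = 1 / 2 := by rw [ha 2 le_rfl]; norm_num [hi1, ha1]
  have hi3 : i 3 = 1 := (hi23 3 (by norm_num) le_rfl).trans hi2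
  have hi4_eq : i 4 = 5 / 4 := by rw [hi4, hi1, ha1, hi2, ha2]; norm_num
  have hclosed := closed_forms_of_recurrences hpsi_succ_succ hpsi0 hpsi1
    (fun m => ha (m + 2) (by omega)) (fun m => hi5 (m + 5) (by omega)) hi2 ha2 hi3 hi4_eq
  intro n hn
  obtain ⟨m, rfl⟩ := Nat.exists_eq_add_of_le' hn
  obtain ⟨him, ham⟩ := hclosed m
  have hdiff : i (m + 2) - a (m + 2) =
      3 / 8 + (8 * (psi m : ℚ) + 8 * psi (m + 1)) / 2 ^ (m + 2 + 4) := by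
    rw [him, ham]; ring
  refine ⟨hdiff, ?_⟩
  have hbound : -(2 : ℚ) ^ (m + 1) ≤ psi m + psi (m + 1) := by
    exact_mod_cast (abs_le.mp (abs_add_le_two_pow hpsi_succ_succ hpsi0 hpsi1 m)).1
  have hfrac : -(1 / 4 : ℚ) ≤ (8 * (psi m : ℚ) + 8 * psi (m + 1)) / 2 ^ (m + 2 + 4) := by
    rw [le_div_iff₀ (by positivity), show m + 2 + 4 = (m + 1) + 5 by ring, pow_add]
    linarith
  rw [hdiff]
  linarith

theorem stmt_15
    (psi : ℕ → ℤ)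
    (hpsi0 : psi 0 = 1) (hpsi1 : psi 1 = 0)
    (hpsi : ∀ n : ℕ, 2 ≤ n → psi n = -2 * psi (n - 2) - psi (n - 1))
    (i a : ℕ → ℚ)
    (ha0 : a 0 = 0) (hi1 : i 1 = 1) (ha1 : a 1 = 0)
    (ha : ∀ n : ℕ, 2 ≤ n → a n = (i (n - 1) + a (n - 1)) / 2)
    (hi23 : ∀ n : ℕ, 2 ≤ n → n ≤ 3 → i n = i (n - 1))
    (hi4 : i 4 = (i 1 + a 1 + i 2 + a 2) / 2)
    (hi5 : ∀ n : ℕ, 5 ≤ n → i n = (i 2 + a 2 + i (n - 3) + a (n - 3)) / 2) :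
    ∀ n : ℕ, 2 ≤ n →
      i n - a n = 3 / 8 + (8 * (psi (n - 2) : ℚ) + 8 * psi (n - 1)) / 2 ^ (n + 4) ∧
      i n - a n ≥ 1 / 8 :=
  stmt_15_general psi hpsi0 hpsi1 hpsi i a hi1 ha1 ha hi23 hi4 hi5
end

section
/- The term (ψ(n-3) + 3ψ(n-2))/2^(n+3) tends to 0 as n → ∞; consequently c(n) - 3n/16 converges to -3/64, where c(n) = a(n-1). -/
/-!
`ψ` solves the recurrence with characteristic polynomial `X² + X + 2`, whose roots `(-1 ± √-7) / 2`
have absolute value `√2`. Concretely, their norm form `2x² + xy + y²`, evaluated at consecutive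
terms, doubles at each step, so `ψ n = O(√2 ^ n)` and `ψ n / 2 ^ n → 0`: this is the first limit.

Substituting `i (m + 4) = 3/4 + a (m + 2)` into the recursion for `a` shows that `b m = a (m + 2)`
satisfies `b (m + 3) = 3/8 + (b m + b (m + 2)) / 2`. Its characteristic polynomial
`2X³ - X² - 1 = (X - 1)(2X² + X + 1)` has the simple root `1`, which makes the particular solution
affine, and the roots of the quadratic factor are half those of `X² + X + 2`. Hence `b` is an affine
sequence plus a combination of `ψ m / 2 ^ m` and `ψ (m + 1) / 2 ^ m`, and three initial values give
`a (m + 2) = 3m/16 + 33/64 - (ψ m + 3 ψ (m + 1)) / 2 ^ (m + 6)`; the second limit follows.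
-/

open Filter Topology

theorem LinearRecurrence.IsSolution.comp_add {R : Type*} [CommSemiring R] {E : LinearRecurrence R}
    {u : ℕ → R} (hu : E.IsSolution u) (k : ℕ) : E.IsSolution (fun n => u (n + k)) := by
  intro n
  simpa only [add_right_comm] using hu (n + k)

theorem LinearRecurrence.IsSolution.mul_add_mul_shift {R : Type*} [CommSemiring R]
    {E : LinearRecurrence R} {u : ℕ → R} (hu : E.IsSolution u) (c d : R) :
    E.IsSolution (fun n => c * u n + d * u (n + 1)) :=
  E.solSpace.add_mem (E.solSpace.smul_mem c hu)
    (E.solSpace.smul_mem d (hu.comp_add 1 : (fun n => u (n + 1)) ∈ _))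

section PsiRecurrence

variable {R : Type*} [CommRing R] {u : ℕ → R}

def psiRec (R : Type*) [CommRing R] : LinearRecurrence R := ⟨2, ![-2, -1]⟩

theorem psiRec_isSolution_iff :
    (psiRec R).IsSolution u ↔ ∀ n, u (n + 2) = -2 * u n - u (n + 1) := by
  show (∀ n, u (n + 2) = ∑ i : Fin 2, ![-2, -1] i * u (n + i)) ↔ _
  simp [Fin.sum_univ_two, sub_eq_add_neg]

theorem psiRec_isSolution_intCast {u : ℕ → ℤ} (hu : (psiRec ℤ).IsSolution u) :
    (psiRec R).IsSolution (fun n => (u n : R)) :=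
  psiRec_isSolution_iff.2 fun n => by simp [psiRec_isSolution_iff.1 hu n]

theorem psiRec_quadForm_eq (hu : (psiRec R).IsSolution u) (n : ℕ) :
    2 * u n ^ 2 + u n * u (n + 1) + u (n + 1) ^ 2 =
      2 ^ n * (2 * u 0 ^ 2 + u 0 * u 1 + u 1 ^ 2) := by
  induction n with
  | zero => ring
  | succ n ih =>
    rw [psiRec_isSolution_iff.1 hu n]
    linear_combination 2 * ih

theorem psiRec_sq_le {u : ℕ → ℝ} (hu : (psiRec ℝ).IsSolution u) (n : ℕ) :
    u n ^ 2 ≤ 2 ^ n * (2 * u 0 ^ 2 + u 0 * u 1 + u 1 ^ 2) := by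
  rw [← psiRec_quadForm_eq hu n]
  nlinarith [sq_nonneg (u n / 2 + u (n + 1)), sq_nonneg (u n)]

theorem tendsto_div_two_pow_of_psiRec {u : ℕ → ℝ} (hu : (psiRec ℝ).IsSolution u) :
    Tendsto (fun n => u n / 2 ^ n) atTop (𝓝 0) := by
  set Q := 2 * u 0 ^ 2 + u 0 * u 1 + u 1 ^ 2
  have hbound : ∀ n, |u n / 2 ^ n| ≤ √(Q / 2 ^ n) := fun n => by
    rw [← Real.sqrt_sq_eq_abs]
    refine Real.sqrt_le_sqrt ?_
    calc (u n / 2 ^ n) ^ 2 = u n ^ 2 / 2 ^ n / 2 ^ n := by ring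
      _ ≤ 2 ^ n * Q / 2 ^ n / 2 ^ n := by gcongr; exact psiRec_sq_le hu n
      _ = Q / 2 ^ n := by field_simp
  have hgeom : Tendsto (fun n => √(Q / 2 ^ n)) atTop (𝓝 0) := by
    simpa using (tendsto_const_nhds.div_atTop (tendsto_pow_atTop_atTop_of_one_lt one_lt_two)).sqrt
  exact squeeze_zero_norm hbound hgeom

end PsiRecurrence

section AveragingRecurrence

variable {K : Type*} [Field K] {x : ℕ → K}

def averagingRec (K : Type*) [Field K] : LinearRecurrence K := ⟨3, ![2⁻¹, 0, 2⁻¹]⟩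

theorem averagingRec_isSolution_iff :
    (averagingRec K).IsSolution x ↔ ∀ n, x (n + 3) = (x n + x (n + 2)) / 2 := by
  show (∀ n, x (n + 3) = ∑ i : Fin 3, ![2⁻¹, 0, 2⁻¹] i * x (n + i)) ↔ _
  simp [Fin.sum_univ_three, mul_add, div_eq_inv_mul]

theorem averagingRec_isSolution_div_two_pow [NeZero (2 : K)] {u : ℕ → K}
    (hu : (psiRec K).IsSolution u) : (averagingRec K).IsSolution (fun n => u n / 2 ^ n) := by
  rw [averagingRec_isSolution_iff]
  intro n
  have h3 : u (n + 3) = -2 * u (n + 1) - u (n + 2) := psiRec_isSolution_iff.1 hu (n + 1)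
  rw [h3, psiRec_isSolution_iff.1 hu n, pow_add, pow_add]
  field_simp
  ring

theorem eq_of_inhomogeneous_averagingRec [CharZero K] {b ψ : ℕ → K}
    (hψ : (psiRec K).IsSolution ψ) (hψ0 : ψ 0 = 1) (hψ1 : ψ 1 = 0)
    (hb0 : b 0 = 1 / 2) (hb1 : b 1 = 3 / 4) (hb2 : b 2 = 7 / 8)
    (hb : ∀ m, b (m + 3) = 3 / 8 + (b m + b (m + 2)) / 2) (m : ℕ) :
    b m = 3 * m / 16 + 33 / 64 - (ψ m + 3 * ψ (m + 1)) / 2 ^ (m + 6) := by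
  have hψ2 : ψ 2 = -2 := by rw [psiRec_isSolution_iff.1 hψ 0, hψ0, hψ1]; ring
  have hψ3 : ψ 3 = 2 := by rw [psiRec_isSolution_iff.1 hψ 1, hψ1, hψ2]; ring
  have hdeviation : (fun m => b m - (3 * m / 16 + 33 / 64)) =
      fun m => (-64⁻¹ * ψ m + -(3 / 64) * ψ (m + 1)) / 2 ^ m := by
    rw [(averagingRec K).eq_iff_eqOn_range_order _ _ ?_
      (averagingRec_isSolution_div_two_pow (hψ.mul_add_mul_shift _ _))]
    · intro n hn
      obtain rfl | rfl | rfl : n = 0 ∨ n = 1 ∨ n = 2 := by simp [averagingRec] at hn; omega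
      all_goals norm_num [hb0, hb1, hb2, hψ0, hψ1, hψ2, hψ3]
    · rw [averagingRec_isSolution_iff]
      intro n
      push_cast
      rw [hb]
      ring
  rw [pow_add]
  linear_combination congrFun hdeviation m

end AveragingRecurrence

section IASystem

variable {i a : ℕ → ℚ}

theorem a_two_three_four_eq (hi1 : i 1 = 1) (ha1 : a 1 = 0)
    (ha : ∀ n : ℕ, 2 ≤ n → a n = (i (n - 1) + a (n - 1)) / 2)
    (hi23 : ∀ n : ℕ, 2 ≤ n → n ≤ 3 → i n = i (n - 1)) :
    a 2 = 1 / 2 ∧ a 3 = 3 / 4 ∧ a 4 = 7 / 8 := by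
  have hi2 : i 2 = 1 := by rw [hi23 2 le_rfl (by norm_num), hi1]
  have hi3 : i 3 = 1 := by rw [hi23 3 (by norm_num) le_rfl, hi2]
  have ha2 : a 2 = 1 / 2 := by rw [ha 2 le_rfl]; norm_num [hi1, ha1]
  have ha3 : a 3 = 3 / 4 := by rw [ha 3 (by norm_num)]; norm_num [hi2, ha2]
  exact ⟨ha2, ha3, by rw [ha 4 (by norm_num)]; norm_num [hi3, ha3]⟩

theorem a_add_five_eq (hi1 : i 1 = 1) (ha1 : a 1 = 0)
    (ha : ∀ n : ℕ, 2 ≤ n → a n = (i (n - 1) + a (n - 1)) / 2)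
    (hi23 : ∀ n : ℕ, 2 ≤ n → n ≤ 3 → i n = i (n - 1))
    (hi4 : i 4 = (i 1 + a 1 + i 2 + a 2) / 2)
    (hi5 : ∀ n : ℕ, 5 ≤ n → i n = (i 2 + a 2 + i (n - 3) + a (n - 3)) / 2) (m : ℕ) :
    a (m + 5) = 3 / 8 + (a (m + 2) + a (m + 4)) / 2 := by
  have hi2 : i 2 = 1 := by rw [hi23 2 le_rfl (by norm_num), hi1]
  have ha2 := (a_two_three_four_eq hi1 ha1 ha hi23).1
  have ha' : ∀ k, a (k + 3) = (i (k + 2) + a (k + 2)) / 2 := fun k => ha (k + 3) (by omega)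
  have hi : i (m + 4) = 3 / 4 + a (m + 2) := by
    cases m with
    | zero => rw [hi4, hi1, ha1, hi2, ha2]; norm_num
    | succ k =>
      have hi5' : i (k + 5) = (i 2 + a 2 + i (k + 2) + a (k + 2)) / 2 := hi5 (k + 5) (by omega)
      rw [hi5', ha' k, hi2, ha2]
      ring
  rw [ha' (m + 2), hi]
  ring

end IASystem

theorem stmt_17_general
    (psi : ℕ → ℤ)
    (hpsi0 : psi 0 = 1) (hpsi1 : psi 1 = 0)
    (hpsi : ∀ n : ℕ, 2 ≤ n → psi n = -2 * psi (n - 2) - psi (n - 1))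
    (i a : ℕ → ℚ)
    (hi1 : i 1 = 1) (ha1 : a 1 = 0)
    (ha : ∀ n : ℕ, 2 ≤ n → a n = (i (n - 1) + a (n - 1)) / 2)
    (hi23 : ∀ n : ℕ, 2 ≤ n → n ≤ 3 → i n = i (n - 1))
    (hi4 : i 4 = (i 1 + a 1 + i 2 + a 2) / 2)
    (hi5 : ∀ n : ℕ, 5 ≤ n → i n = (i 2 + a 2 + i (n - 3) + a (n - 3)) / 2) :
    Filter.Tendsto (fun n : ℕ => (((psi (n - 3) : ℝ) + 3 * psi (n - 2)) / 2 ^ (n + 3))) Filter.atTop (nhds 0) ∧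
    Filter.Tendsto (fun n : ℕ => (a (n - 1) : ℝ) - 3 * n / 16) Filter.atTop (nhds (-3 / 64)) := by
  have hψ : (psiRec ℤ).IsSolution psi :=
    psiRec_isSolution_iff.2 fun n => hpsi (n + 2) (by omega)
  have hlim : Tendsto (fun m => ((psi m : ℝ) + 3 * psi (m + 1)) / 2 ^ (m + 6)) atTop (𝓝 0) := by
    have h := (tendsto_div_two_pow_of_psiRec
      ((psiRec_isSolution_intCast hψ).mul_add_mul_shift 1 3)).div_const 64
    rw [zero_div] at h
    exact h.congr fun m => by ring
  obtain ⟨ha2, ha3, ha4⟩ := a_two_three_four_eq hi1 ha1 ha hi23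
  have hclosed (m : ℕ) :
      (a (m + 2) : ℝ) = 3 * m / 16 + 33 / 64 - (psi m + 3 * psi (m + 1)) / 2 ^ (m + 6) := by
    have := eq_of_inhomogeneous_averagingRec (K := ℚ) (b := fun m => a (m + 2))
      (psiRec_isSolution_intCast hψ) (by simp [hpsi0]) (by simp [hpsi1]) ha2 ha3 ha4 (a_add_five_eq hi1 ha1 ha hi23 hi4 hi5) m
    rw [this]
    push_cast
    ring
  refine ⟨(tendsto_add_atTop_iff_nat 3).1 ?_, (tendsto_add_atTop_iff_nat 3).1 ?_⟩
  · simpa using hlim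
  · have := (tendsto_const_nhds (x := (-3 / 64 : ℝ))).sub hlim
    rw [sub_zero] at this
    refine this.congr fun m => ?_
    rw [show m + 3 - 1 = m + 2 from rfl, hclosed]
    push_cast
    ring

theorem stmt_17
    (psi : ℕ → ℤ)
    (hpsi0 : psi 0 = 1) (hpsi1 : psi 1 = 0)
    (hpsi : ∀ n : ℕ, 2 ≤ n → psi n = -2 * psi (n - 2) - psi (n - 1))
    (i a : ℕ → ℚ)
    (ha0 : a 0 = 0) (hi1 : i 1 = 1) (ha1 : a 1 = 0)
    (ha : ∀ n : ℕ, 2 ≤ n → a n = (i (n - 1) + a (n - 1)) / 2)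
    (hi23 : ∀ n : ℕ, 2 ≤ n → n ≤ 3 → i n = i (n - 1))
    (hi4 : i 4 = (i 1 + a 1 + i 2 + a 2) / 2)
    (hi5 : ∀ n : ℕ, 5 ≤ n → i n = (i 2 + a 2 + i (n - 3) + a (n - 3)) / 2) :
    Filter.Tendsto (fun n : ℕ => (((psi (n - 3) : ℝ) + 3 * psi (n - 2)) / 2 ^ (n + 3))) Filter.atTop (nhds 0) ∧
    Filter.Tendsto (fun n : ℕ => (a (n - 1) : ℝ) - 3 * n / 16) Filter.atTop (nhds (-3 / 64)) :=
  stmt_17_general psi hpsi0 hpsi1 hpsi i a hi1 ha1 ha hi23 hi4 hi5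
end

section
/- For every positive integer n, a(n) ≤ i(n) ≤ a(n) + 1, and both a(n) and i(n) lie in the interval [0, n]. -/
/-!
Write `s n = i n + a n`. For `n ≥ 1` the recurrences give `a (n + 1) = s n / 2` and
`i (n + 4) = (3/2 + s (n + 1)) / 2`, so the increments `d n = s (n + 1) - s n` satisfy
`d (n + 4) = (d (n + 3) + d (n + 1)) / 2`. Being averages of earlier increments, they stay in the
interval `[0, 3/4]` spanned by the first three, `1/2, 1/4, 3/8`. Hence `s` grows from `s 1 = 1`
by at most `3/4` per step, so `1 ≤ s n ≤ n`, and
`i (n + 4) - a (n + 4) = (3/2 - d (n + 1) - d (n + 2)) / 2` lies in `[0, 3/4]`.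
-/

open Set

theorem mem_of_avg_recurrence {α : Type*} [DivisionRing α] {f : ℕ → α} {S : Set α}
    (hS : ∀ x ∈ S, ∀ y ∈ S, (x + y) / 2 ∈ S)
    (hrec : ∀ n, f (n + 3) = (f (n + 2) + f n) / 2)
    (h0 : f 0 ∈ S) (h1 : f 1 ∈ S) (h2 : f 2 ∈ S) (n : ℕ) : f n ∈ S := by
  suffices ∀ n, f n ∈ S ∧ f (n + 1) ∈ S ∧ f (n + 2) ∈ S from (this n).1
  intro n
  induction n with
  | zero => exact ⟨h0, h1, h2⟩
  | succ n ih =>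
    obtain ⟨hn, hn1, hn2⟩ := ih
    exact ⟨hn1, hn2, hrec n ▸ hS _ hn2 _ hn⟩

theorem mem_Icc_of_sub_mem_Icc {α : Type*} [AddCommGroup α] [PartialOrder α]
    [IsOrderedAddMonoid α] {t : ℕ → α} {c : α} (hstep : ∀ n, t (n + 1) - t n ∈ Icc 0 c) (n : ℕ) :
    t n ∈ Icc (t 0) (t 0 + n • c) := by
  induction n with
  | zero => simp
  | succ n ih =>
    obtain ⟨hlo, hhi⟩ := hstep n
    rw [sub_nonneg] at hlo
    rw [sub_le_iff_le_add'] at hhi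
    rw [succ_nsmul, ← add_assoc]
    exact ⟨ih.1.trans hlo, hhi.trans (add_le_add_left ih.2 c)⟩

structure IARecurrence (i a : ℕ → ℚ) : Prop where
  i_one : i 1 = 1
  a_one : a 1 = 0
  a_rec : ∀ n : ℕ, 2 ≤ n → a n = (i (n - 1) + a (n - 1)) / 2
  i_rec_le_three : ∀ n : ℕ, 2 ≤ n → n ≤ 3 → i n = i (n - 1)
  i_four : i 4 = (i 1 + a 1 + i 2 + a 2) / 2
  i_rec : ∀ n : ℕ, 5 ≤ n → i n = (i 2 + a 2 + i (n - 3) + a (n - 3)) / 2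

namespace IARecurrence

variable {i a : ℕ → ℚ}

theorem a_succ (h : IARecurrence i a) {n : ℕ} (hn : 1 ≤ n) : a (n + 1) = (i n + a n) / 2 := by
  simpa using h.a_rec (n + 1) (by omega)

theorem i_two (h : IARecurrence i a) : i 2 = 1 := by
  simpa [h.i_one] using h.i_rec_le_three 2 le_rfl (by norm_num)

theorem a_two (h : IARecurrence i a) : a 2 = 1 / 2 := by
  rw [h.a_succ le_rfl, h.i_one, h.a_one]; norm_num

theorem i_three (h : IARecurrence i a) : i 3 = 1 := by
  simpa [h.i_two] using h.i_rec_le_three 3 (by norm_num) le_rfl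

theorem a_three (h : IARecurrence i a) : a 3 = 3 / 4 := by
  rw [h.a_succ (by norm_num), h.i_two, h.a_two]; norm_num

theorem i_add_four (h : IARecurrence i a) (n : ℕ) :
    i (n + 4) = (3 / 2 + (i (n + 1) + a (n + 1))) / 2 := by
  rcases n with _ | n
  · rw [h.i_four, h.i_two, h.a_two]; ring
  · rw [h.i_rec _ (by omega), show n + 1 + 4 - 3 = n + 1 + 1 by omega, h.i_two, h.a_two]
    ring

theorem sum_add_four (h : IARecurrence i a) (n : ℕ) :
    i (n + 4) + a (n + 4) =
      (i (n + 3) + a (n + 3)) / 2 + (3 / 2 + (i (n + 1) + a (n + 1))) / 2 := by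
  rw [h.i_add_four, h.a_succ (n := n + 3) (by omega)]; ring

theorem sum_step_mem_Icc (h : IARecurrence i a) (n : ℕ) :
    i (n + 2) + a (n + 2) - (i (n + 1) + a (n + 1)) ∈ Icc (0 : ℚ) (3 / 4) := by
  have hconv : ∀ x ∈ Icc (0 : ℚ) (3 / 4), ∀ y ∈ Icc (0 : ℚ) (3 / 4),
      (x + y) / 2 ∈ Icc (0 : ℚ) (3 / 4) :=
    fun x hx y hy => ⟨by linarith [hx.1, hy.1], by linarith [hx.2, hy.2]⟩
  refine mem_of_avg_recurrence
    (f := fun k => i (k + 2) + a (k + 2) - (i (k + 1) + a (k + 1))) hconv (fun k => ?_) ?_ ?_ ?_ n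
  · rw [h.sum_add_four (k + 1), h.sum_add_four k]; ring
  all_goals
    norm_num [h.sum_add_four 0, h.i_one, h.a_one, h.i_two, h.a_two, h.i_three, h.a_three]

theorem sum_mem_Icc (h : IARecurrence i a) {n : ℕ} (hn : 1 ≤ n) :
    i n + a n ∈ Icc (1 : ℚ) n := by
  obtain ⟨k, rfl⟩ : ∃ k, n = k + 1 := ⟨n - 1, by omega⟩
  have hbound :=
    mem_Icc_of_sub_mem_Icc (t := fun k => i (k + 1) + a (k + 1)) h.sum_step_mem_Icc k
  simp only [zero_add, h.i_one, h.a_one, nsmul_eq_mul, mem_Icc] at hbound ⊢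
  push_cast
  constructor <;> linarith [hbound.1, hbound.2, (Nat.cast_nonneg k : (0 : ℚ) ≤ k)]

theorem a_nonneg (h : IARecurrence i a) {n : ℕ} (hn : 1 ≤ n) : 0 ≤ a n := by
  rcases n with _ | _ | n
  · omega
  · rw [h.a_one]
  · rw [h.a_succ (by omega)]; linarith [(h.sum_mem_Icc (n := n + 1) (by omega)).1]

theorem i_sub_a_mem_Icc (h : IARecurrence i a) {n : ℕ} (hn : 1 ≤ n) :
    i n - a n ∈ Icc (0 : ℚ) 1 := by
  match n, hn with
  | 1, _ => norm_num [h.i_one, h.a_one]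
  | 2, _ => norm_num [h.i_two, h.a_two]
  | 3, _ => norm_num [h.i_three, h.a_three]
  | n + 4, _ =>
    have h₁ := h.sum_step_mem_Icc n
    have h₂ := h.sum_step_mem_Icc (n + 1)
    rw [h.i_add_four, h.a_succ (n := n + 3) (by omega)]
    constructor <;> linarith [h₁.1, h₁.2, h₂.1, h₂.2]

end IARecurrence

theorem stmt_19_general
    (i a : ℕ → ℚ)
    (hi1 : i 1 = 1) (ha1 : a 1 = 0)
    (ha : ∀ n : ℕ, 2 ≤ n → a n = (i (n - 1) + a (n - 1)) / 2)
    (hi23 : ∀ n : ℕ, 2 ≤ n → n ≤ 3 → i n = i (n - 1))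
    (hi4 : i 4 = (i 1 + a 1 + i 2 + a 2) / 2)
    (hi5 : ∀ n : ℕ, 5 ≤ n → i n = (i 2 + a 2 + i (n - 3) + a (n - 3)) / 2) :
    ∀ n : ℕ, 1 ≤ n →
      a n ≤ i n ∧ i n ≤ a n + 1 ∧ 0 ≤ a n ∧ a n ≤ n ∧ 0 ≤ i n ∧ i n ≤ n := by
  have h : IARecurrence i a := ⟨hi1, ha1, ha, hi23, hi4, hi5⟩
  intro n hn
  have ha_nonneg := h.a_nonneg hn
  obtain ⟨hle, hle_one⟩ := h.i_sub_a_mem_Icc hn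
  obtain ⟨-, hsum⟩ := h.sum_mem_Icc hn
  refine ⟨?_, ?_, ha_nonneg, ?_, ?_, ?_⟩ <;> linarith

theorem stmt_19
    (i a : ℕ → ℚ)
    (ha0 : a 0 = 0) (hi1 : i 1 = 1) (ha1 : a 1 = 0)
    (ha : ∀ n : ℕ, 2 ≤ n → a n = (i (n - 1) + a (n - 1)) / 2)
    (hi23 : ∀ n : ℕ, 2 ≤ n → n ≤ 3 → i n = i (n - 1))
    (hi4 : i 4 = (i 1 + a 1 + i 2 + a 2) / 2)
    (hi5 : ∀ n : ℕ, 5 ≤ n → i n = (i 2 + a 2 + i (n - 3) + a (n - 3)) / 2) :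
    ∀ n : ℕ, 1 ≤ n →
      a n ≤ i n ∧ i n ≤ a n + 1 ∧ 0 ≤ a n ∧ a n ≤ n ∧ 0 ≤ i n ∧ i n ≤ n :=
  stmt_19_general i a hi1 ha1 ha hi23 hi4 hi5
end
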